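/- arXiv:1208.2920 — 10 statements merged into one kernel-verified Lean document; each statement's English description precedes it below -/
import Mathlib

section
/- If M is an n×n fooling-set matrix over a field k (i.e., all diagonal entries are nonzero and M_{k,ℓ}·M_{ℓ,k} = 0 for all k ≠ ℓ), then n ≤ (rank M)². -/
/-!
The Hadamard product `M ⊙ Mᵀ` has entries `M i j * M j i`, so for a fooling-set matrix it is
diagonal with nonzero diagonal and has rank `n`. On the other hand `A ⊙ B` is a submatrix of the
Kronecker product `A ⊗ₖ B`, and rank factorizations `A = C₁ R₁`, `B = C₂ R₂` give
`A ⊗ₖ B = (C₁ ⊗ₖ C₂) (R₁ ⊗ₖ R₂)`, whence `rank (A ⊙ B) ≤ rank A * rank B`.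
-/

open Matrix
open scoped Kronecker

namespace Matrix

variable {K : Type*} [Field K] {m n p q : Type*} [Fintype n] [Fintype q]

theorem exists_rank_factorization (A : Matrix m n K) :
    ∃ (C : Matrix m (Fin A.rank) K) (R : Matrix (Fin A.rank) n K), A = C * R := by
  have := Module.Finite.span_of_finite K (Set.finite_range A.col)
  let b : Module.Basis (Fin A.rank) K (Submodule.span K (Set.range A.col)) :=
    Module.finBasisOfFinrankEq K _ A.rank_eq_finrank_span_cols.symm
  have hcol (j : n) : A.col j ∈ Submodule.span K (Set.range A.col) :=
    Submodule.subset_span ⟨j, rfl⟩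
  refine ⟨of fun i a => (b a : m → K) i, of fun a j => b.repr ⟨A.col j, hcol j⟩ a, ?_⟩
  ext i j
  have hexpand := congrFun (congrArg Subtype.val (b.sum_repr ⟨A.col j, hcol j⟩)) i
  simp only [Submodule.coe_sum, Submodule.coe_smul, Finset.sum_apply, Pi.smul_apply,
    smul_eq_mul, col_apply] at hexpand
  simp only [mul_apply, of_apply, ← hexpand, mul_comm]

theorem rank_kronecker_le (A : Matrix m n K) (B : Matrix p q K) :
    (A ⊗ₖ B).rank ≤ A.rank * B.rank := by
  obtain ⟨C₁, R₁, hA⟩ := A.exists_rank_factorization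
  obtain ⟨C₂, R₂, hB⟩ := B.exists_rank_factorization
  calc (A ⊗ₖ B).rank = ((C₁ ⊗ₖ C₂) * (R₁ ⊗ₖ R₂)).rank := by rw [← mul_kronecker_mul, ← hA, ← hB]
    _ ≤ (C₁ ⊗ₖ C₂).rank := rank_mul_le_left _ _
    _ ≤ Fintype.card (Fin A.rank × Fin B.rank) := rank_le_card_width _
    _ = A.rank * B.rank := by simp

theorem rank_hadamard_le (A B : Matrix m n K) : (A ⊙ B).rank ≤ A.rank * B.rank :=
  calc (A ⊙ B).rank = ((A ⊗ₖ B).submatrix (fun i => (i, i)) (fun j => (j, j))).rank := rfl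
    _ ≤ A.rank * B.rank := (rank_submatrix_le _ _ _).trans (rank_kronecker_le A B)

end Matrix

theorem fooling_set_rank_bound {K : Type*} [Field K] {n : ℕ}
    (M : Matrix (Fin n) (Fin n) K)
    (hdiag : ∀ i, M i i ≠ 0)
    (hoff : ∀ i j, i ≠ j → M i j * M j i = 0) :
    n ≤ M.rank ^ 2 := by
  classical
  have hdiagonal : M ⊙ Mᵀ = diagonal fun i => M i i * M i i := by
    ext i j
    rcases eq_or_ne i j with rfl | hij
    · simp [hadamard]
    · simp [hadamard, hij, hoff i j hij]
  have hrank : (M ⊙ Mᵀ).rank = n := by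
    rw [hdiagonal, rank_diagonal, Fintype.card_subtype_compl]
    simp [hdiag]
  calc n = (M ⊙ Mᵀ).rank := hrank.symm
    _ ≤ M.rank * Mᵀ.rank := rank_hadamard_le M Mᵀ
    _ = M.rank ^ 2 := by rw [rank_transpose, sq]
end

section
/- Let f : ℤ → F_p satisfy f(k+r) = -f(k) - f(k+1) with f(0)=1, f(1)=...=f(r-1)=0, where r = p^t + 1 for some integer t ≥ 1. Then n := r(r-1) + 1 is a period of f, i.e., f(k+n) = f(k) for all k ∈ ℤ. -/
/-!
Let `S` be the shift `f ↦ f (· + 1)` on sequences `ℤ → 𝔽_p` and `P = X ^ r + X + 1`. The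
recurrence says `P(S) f = 0`, so `Q(S) f = 0` for every multiple `Q` of `P`; it suffices that
`P ∣ X ^ n - 1`. With `q = p ^ t`, the root `x` of `P` in `𝔽_p[X]/(P)` satisfies
`x ^ (q + 1) = -(x + 1)`, and the Frobenius gives `x ^ ((q + 1) q) = (-(x + 1)) ^ q = -(x ^ q + 1)`,
hence `x ^ n = -x ^ (q + 1) - x = 1`.
-/

open Polynomial

section Shift

variable (K : Type*) [CommRing K]

noncomputable def shift : Module.End K (ℤ → K) :=
  LinearMap.funLeft K K (· + 1)

variable {K}

theorem shift_apply (f : ℤ → K) (k : ℤ) : shift K f k = f (k + 1) := rfl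

theorem shift_pow_apply (n : ℕ) (f : ℤ → K) (k : ℤ) : (shift K ^ n) f k = f (k + n) := by
  induction n generalizing k with
  | zero => simp
  | succ n ih =>
    rw [pow_succ', Module.End.mul_apply, shift_apply, ih]
    congr 1
    push_cast
    ring

theorem aeval_shift_eq_zero_of_dvd {P Q : K[X]} (hPQ : P ∣ Q) {f : ℤ → K}
    (hf : aeval (shift K) P f = 0) : aeval (shift K) Q f = 0 := by
  obtain ⟨R, rfl⟩ := hPQ
  rw [mul_comm, aeval_mul, Module.End.mul_apply, hf, map_zero]

theorem periodic_of_aeval_shift_eq_zero {P : K[X]} {n : ℕ} (hP : P ∣ X ^ n - 1) {f : ℤ → K}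
    (hf : aeval (shift K) P f = 0) : Function.Periodic f n := by
  intro k
  have h := congrFun (aeval_shift_eq_zero_of_dvd hP hf) k
  rwa [map_sub, map_pow, aeval_X, map_one, LinearMap.sub_apply, Pi.sub_apply, shift_pow_apply,
    Module.End.one_apply, Pi.zero_apply, sub_eq_zero] at h

theorem aeval_shift_X_pow_add_X_add_one_apply (r : ℕ) (f : ℤ → K) (k : ℤ) :
    aeval (shift K) (X ^ r + X + 1 : K[X]) f k = f (k + r) + f (k + 1) + f k := by
  simp [shift_pow_apply, shift_apply]

end Shift

theorem pow_mul_add_one_eq_one_of_pow_add_add_one_eq_zero {R : Type*} [CommRing R] {x : R} {q : ℕ}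
    (hx : x ^ (q + 1) + x + 1 = 0) (hfrob : (-(x + 1)) ^ q = -(x ^ q + 1)) :
    x ^ ((q + 1) * q + 1) = 1 := by
  have hxq : x ^ (q + 1) = -(x + 1) := by linear_combination hx
  calc x ^ ((q + 1) * q + 1) = (x ^ (q + 1)) ^ q * x := by rw [pow_succ, pow_mul]
    _ = -(x ^ q + 1) * x := by rw [hxq, hfrob]
    _ = -(x ^ (q + 1)) - x := by ring
    _ = 1 := by rw [hxq]; ring

theorem X_pow_add_X_add_one_dvd_X_pow_sub_one (K : Type*) [CommRing K] (p : ℕ) [ExpChar K p]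
    (t : ℕ) : (X ^ (p ^ t + 1) + X + 1 : K[X]) ∣ X ^ ((p ^ t + 1) * p ^ t + 1) - 1 := by
  set P : K[X] := X ^ (p ^ t + 1) + X + 1
  rw [← AdjoinRoot.mk_eq_zero, map_sub, map_pow, AdjoinRoot.mk_X, map_one, sub_eq_zero]
  apply pow_mul_add_one_eq_one_of_pow_add_add_one_eq_zero
  · simpa [P] using AdjoinRoot.eval₂_root P
  · have hfrob : (-(X + 1) : K[X]) ^ p ^ t = -(X ^ p ^ t + 1) := by
      rw [neg_pow, add_pow_expChar_pow, one_pow, neg_one_pow_expChar_pow, neg_one_mul]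
    simpa only [map_pow, map_neg, map_add, map_one, AdjoinRoot.mk_X] using
      congrArg (AdjoinRoot.mk P) hfrob

theorem periodicity_general (p : ℕ) [Fact p.Prime] (t : ℕ)
    (r n : ℕ) (hr : r = p ^ t + 1) (hn : n = r * (r - 1) + 1)
    (f : ℤ → ZMod p)
    (hrec : ∀ k : ℤ, f (k + r) = -f k - f (k + 1)) :
    ∀ k : ℤ, f (k + n) = f k := by
  have hf : aeval (shift (ZMod p)) (X ^ r + X + 1 : (ZMod p)[X]) f = 0 := by
    ext k
    rw [aeval_shift_X_pow_add_X_add_one_apply, hrec, Pi.zero_apply]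
    ring
  have hn' : n = (p ^ t + 1) * p ^ t + 1 := by rw [hn, hr, Nat.add_sub_cancel]
  subst hr hn'
  exact periodic_of_aeval_shift_eq_zero (X_pow_add_X_add_one_dvd_X_pow_sub_one _ p t) hf

theorem periodicity (p : ℕ) [Fact p.Prime] (t : ℕ) (ht : 1 ≤ t)
    (r n : ℕ) (hr : r = p ^ t + 1) (hn : n = r * (r - 1) + 1)
    (f : ℤ → ZMod p)
    (hrec : ∀ k : ℤ, f (k + r) = -f k - f (k + 1))
    (h0 : f 0 = 1)
    (hinit : ∀ i : ℤ, 1 ≤ i → i ≤ (r : ℤ) - 1 → f i = 0) :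
    ∀ k : ℤ, f (k + n) = f k :=
  periodicity_general p t r n hr hn f hrec
end

section
/- Let f : ℤ → F_p satisfy f(k+r) = -f(k) - f(k+1) with f(0)=1, f(1)=...=f(r-1)=0, where r = p^t + 1 for t ≥ 1, and let n = r(r-1)+1. Then f(k)·f(-k) = 0 for every integer k not divisible by n. -/
/-!
Work over an algebraic closure `K` of `𝔽_p` and put `q = p ^ t`. The polynomial
`X ^ (q + 1) + X + 1` is separable with `q + 1` roots `α`, and by Newton's identities their power
sums `S j = ∑ α ^ j` vanish for `1 ≤ j ≤ q`, while `S 0 = q + 1 = 1`; as `S` obeys the same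
recurrence, `f = S`. Applying Frobenius to `α ^ (q + 1) = -(α + 1)` gives `α ^ n = 1`, and the
ratios of distinct roots are pairwise distinct, so they run exactly once through the `n - 1`
nontrivial `n`-th roots of unity (the roots form a Singer difference set). Hence for `n ∤ k`,
`S k * S (-k) = ∑ (α / β) ^ k = (q + 1) - 1 = q = 0`.
-/

open Polynomial Finset

theorem eq_of_recurrence_of_eqOn_window {M : Type*} [AddCommGroup M] {r : ℕ} (hr : 2 ≤ r)
    {u v : ℤ → M} (hu : ∀ k, u (k + r) = -u k - u (k + 1))
    (hv : ∀ k, v (k + r) = -v k - v (k + 1))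
    (hinit : ∀ i : ℤ, 0 ≤ i → i < r → u i = v i) : u = v := by
  have window : ∀ m : ℕ, ∀ k : ℤ, -(m : ℤ) ≤ k → k < r + m → u k = v k := by
    intro m
    induction m with
    | zero => exact fun k h₁ h₂ ↦ hinit k (by omega) (by omega)
    | succ m ih =>
      intro k h₁ h₂
      by_cases hlow : k = -(m + 1 : ℤ)
      · have h := (hu k).symm.trans ((ih (k + r) (by omega) (by omega)).trans (hv k))
        rw [ih (k + 1) (by omega) (by omega)] at h
        exact neg_inj.mp (sub_left_inj.mp h)
      by_cases hhigh : k = r + m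
      · rw [hhigh, add_comm, hu, hv, ih m (by omega) (by omega), ih (m + 1) (by omega) (by omega)]
      exact ih k (by omega) (by omega)
  funext k
  exact window k.natAbs k (by omega) (by omega)

section PowEqNegAddOne

variable {K : Type*} [Field K] {N : ℕ}

theorem ne_zero_of_pow_eq_neg_add_one (hN : N ≠ 0) {a : K} (ha : a ^ N = -(a + 1)) : a ≠ 0 := by
  rintro rfl
  simp [zero_pow hN] at ha

theorem sum_zpow_add_eq_of_pow_eq_neg_add_one (hN : N ≠ 0) {R : Finset K}
    (hR : ∀ a ∈ R, a ^ N = -(a + 1)) (k : ℤ) :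
    ∑ a ∈ R, a ^ (k + N) = -∑ a ∈ R, a ^ k - ∑ a ∈ R, a ^ (k + 1) := by
  rw [← sum_neg_distrib, ← sum_sub_distrib]
  refine sum_congr rfl fun a ha ↦ ?_
  have ha₀ := ne_zero_of_pow_eq_neg_add_one hN (hR a ha)
  rw [zpow_add₀ ha₀, zpow_add₀ ha₀, zpow_natCast, hR a ha, zpow_one]
  ring

/-- Writing `c = a / b`, the relation `b * (c ^ N - c) = 1 - c ^ N` determines `b`, and then `a`,
from `c`, unless `c = 1`. -/
theorem injOn_div_offDiag_of_pow_eq_neg_add_one [DecidableEq K] (hN : N ≠ 0) {R : Finset K}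
    (hR : ∀ a ∈ R, a ^ N = -(a + 1)) :
    Set.InjOn (fun x : K × K ↦ x.1 / x.2) R.offDiag := by
  have recover : ∀ a ∈ R, ∀ b ∈ R, b * ((a / b) ^ N - a / b) = 1 - (a / b) ^ N := by
    intro a ha b hb
    have hb₀ := ne_zero_of_pow_eq_neg_add_one hN (hR b hb)
    have hab : a / b * b = a := div_mul_cancel₀ a hb₀
    have h : (a / b) ^ N * b ^ N = a ^ N := by rw [← mul_pow, hab]
    rw [hR a ha, hR b hb] at h
    linear_combination -h - hab
  rintro ⟨a, b⟩ hab ⟨a', b'⟩ hab' (h : a / b = a' / b')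
  simp only [coe_offDiag, Set.mem_offDiag] at hab hab'
  obtain ⟨ha, hb, hne⟩ := hab
  obtain ⟨ha', hb', -⟩ := hab'
  have hb₀ := ne_zero_of_pow_eq_neg_add_one hN (hR b hb)
  have hc : (a / b) ^ N - a / b ≠ 0 := by
    intro h₀
    have hpow : (a / b) ^ N = 1 := by linear_combination recover a ha b hb - b * h₀
    exact hne ((div_eq_one_iff_eq hb₀).mp (by linear_combination hpow - h₀))
  have hbb : b = b' := mul_right_cancel₀ hc <| by
    rw [recover a ha b hb, h, recover a' ha' b' hb']
  subst hbb
  rw [div_left_inj' hb₀] at h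
  rw [h]

theorem pow_eq_neg_add_one_of_mem_roots {a : K} (ha : a ∈ (X ^ N + X + 1 : K[X]).roots) :
    a ^ N = -(a + 1) := by
  have h := isRoot_of_mem_roots ha
  simp only [IsRoot, eval_add, eval_pow, eval_X, eval_one] at h
  linear_combination h

end PowEqNegAddOne

theorem Finset.sum_pow_eq_of_esymm_eq_zero {A : Type*} [CommRing A] (s : Finset A) {m : ℕ}
    (hm : 0 < m) (hs : ∀ i, 0 < i → i < m → s.val.esymm i = 0) :
    ∑ a ∈ s, a ^ m = (-1) ^ (m + 1) * m * s.val.esymm m := by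
  have newton := congrArg (MvPolynomial.aeval ((↑) : s → A))
    (MvPolynomial.psum_eq_mul_esymm_sub_sum s A m hm)
  have hesymm : ∀ i, MvPolynomial.aeval ((↑) : s → A) (MvPolynomial.esymm s A i) =
      s.val.esymm i := by
    intro i
    rw [MvPolynomial.aeval_esymm_eq_multiset_esymm, univ_eq_attach, attach_val,
      Multiset.attach_map_val]
  have hlower : ∀ x ∈ {x ∈ antidiagonal m | x.1 ∈ Set.Ioo 0 m},
      MvPolynomial.aeval ((↑) : s → A)
        ((-1) ^ x.1 * MvPolynomial.esymm s A x.1 * MvPolynomial.psum s A x.2) = 0 := by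
    intro x hx
    obtain ⟨-, h₁, h₂⟩ := mem_filter.mp hx
    rw [map_mul, map_mul, hesymm, hs x.1 h₁ h₂, mul_zero, zero_mul]
  rw [MvPolynomial.psum, map_sum, map_sub, map_sum, sum_eq_zero hlower, sub_zero] at newton
  rw [map_mul, map_mul, map_pow, map_neg, map_one, map_natCast, hesymm] at newton
  simpa only [map_pow, MvPolynomial.aeval_X, sum_coe_sort s (· ^ m)] using newton

theorem pow_mul_add_one_eq_one_of_pow_eq_neg_add_one {R : Type*} [CommRing R] {p : ℕ}
    [Fact p.Prime] [CharP R p] {t : ℕ} {a : R} (ha : a ^ (p ^ t + 1) = -(a + 1)) :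
    a ^ ((p ^ t + 1) * p ^ t + 1) = 1 := by
  rw [pow_succ, pow_mul, ha, neg_pow, neg_one_pow_char_pow, add_pow_char_pow, one_pow]
  linear_combination -ha

section Trinomial

variable {K : Type*} [Field K] {q : ℕ}

theorem monic_X_pow_add_X_add_one (hq : q ≠ 0) : (X ^ (q + 1) + X + 1 : K[X]).Monic := by
  monicity!

theorem natDegree_X_pow_add_X_add_one (hq : q ≠ 0) :
    (X ^ (q + 1) + X + 1 : K[X]).natDegree = q + 1 := by
  compute_degree!
  simp [hq]

theorem separable_X_pow_add_X_add_one (hq : (q : K) = 0) :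
    (X ^ (q + 1) + X + 1 : K[X]).Separable := by
  refine ⟨1, -X, ?_⟩
  simp [hq]
  ring

theorem esymm_roots_X_pow_add_X_add_one_eq_zero (hg : (X ^ (q + 1) + X + 1 : K[X]).Splits)
    {i : ℕ} (h₀ : 0 < i) (hi : i < q) : (X ^ (q + 1) + X + 1 : K[X]).roots.esymm i = 0 := by
  have hq : q ≠ 0 := by omega
  have hcoeff := coeff_eq_esymm_roots_of_card (splits_iff_card_roots.mp hg)
    (k := q + 1 - i) (by rw [natDegree_X_pow_add_X_add_one hq]; omega)
  rw [(monic_X_pow_add_X_add_one hq).leadingCoeff, natDegree_X_pow_add_X_add_one hq,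
    Nat.sub_sub_self (by omega), one_mul] at hcoeff
  have hzero : (X ^ (q + 1) + X + 1 : K[X]).coeff (q + 1 - i) = 0 := by
    simp only [coeff_add, coeff_X_pow, coeff_X, coeff_one]
    split_ifs <;> first | omega | simp
  rw [hzero] at hcoeff
  exact (mul_eq_zero.mp hcoeff.symm).resolve_left (pow_ne_zero _ (neg_ne_zero.mpr one_ne_zero))

theorem sum_pow_roots_X_pow_add_X_add_one_eq_zero [DecidableEq K] (hq : (q : K) = 0)
    (hg : (X ^ (q + 1) + X + 1 : K[X]).Splits) {j : ℕ} (h₀ : 0 < j) (hj : j ≤ q) :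
    ∑ a ∈ (X ^ (q + 1) + X + 1 : K[X]).roots.toFinset, a ^ j = 0 := by
  have hval : (X ^ (q + 1) + X + 1 : K[X]).roots.toFinset.val = (X ^ (q + 1) + X + 1).roots := by
    rw [Multiset.toFinset_val, (nodup_roots (separable_X_pow_add_X_add_one hq)).dedup]
  rw [sum_pow_eq_of_esymm_eq_zero _ h₀ fun i hi hij ↦ by
    rw [hval]; exact esymm_roots_X_pow_add_X_add_one_eq_zero hg hi (by omega), hval]
  rcases hj.lt_or_eq with hj | rfl
  · rw [esymm_roots_X_pow_add_X_add_one_eq_zero hg h₀ hj, mul_zero]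
  · rw [hq, mul_zero, zero_mul]

theorem card_roots_toFinset_X_pow_add_X_add_one [DecidableEq K] (hq : (q : K) = 0)
    (hq₀ : q ≠ 0) (hg : (X ^ (q + 1) + X + 1 : K[X]).Splits) :
    #(X ^ (q + 1) + X + 1 : K[X]).roots.toFinset = q + 1 := by
  rw [Multiset.toFinset_card_of_nodup (nodup_roots (separable_X_pow_add_X_add_one hq)),
    splits_iff_card_roots.mp hg, natDegree_X_pow_add_X_add_one hq₀]

theorem eq_sum_zpow_roots_of_recurrence [DecidableEq K] (hq : (q : K) = 0) (hq₀ : q ≠ 0)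
    (hg : (X ^ (q + 1) + X + 1 : K[X]).Splits) {u : ℤ → K}
    (hrec : ∀ k : ℤ, u (k + (q + 1 : ℕ)) = -u k - u (k + 1)) (h0 : u 0 = 1)
    (hinit : ∀ i : ℤ, 1 ≤ i → i ≤ q → u i = 0) :
    u = fun j ↦ ∑ a ∈ (X ^ (q + 1) + X + 1 : K[X]).roots.toFinset, a ^ j := by
  have hroot : ∀ a ∈ (X ^ (q + 1) + X + 1 : K[X]).roots.toFinset, a ^ (q + 1) = -(a + 1) :=
    fun a ha ↦ pow_eq_neg_add_one_of_mem_roots (Multiset.mem_toFinset.mp ha)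
  refine eq_of_recurrence_of_eqOn_window (by omega) hrec
    (sum_zpow_add_eq_of_pow_eq_neg_add_one (by omega) hroot) fun i h₁ h₂ ↦ ?_
  rcases h₁.eq_or_lt with rfl | h₁
  · simp [h0, card_roots_toFinset_X_pow_add_X_add_one hq hq₀ hg, hq]
  · lift i to ℕ using h₁.le
    rw [hinit i (by omega) (by omega), eq_comm]
    simp only [zpow_natCast]
    exact sum_pow_roots_X_pow_add_X_add_one_eq_zero hq hg (by omega) (by omega)

end Trinomial

section RootsOfUnity

variable {K : Type*} [Field K] {n : ℕ} {ζ : K}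

theorem IsPrimitiveRoot.sum_nthRootsFinset_zpow_eq_zero (hζ : IsPrimitiveRoot ζ n) {k : ℤ}
    (hk : ¬ (n : ℤ) ∣ k) : ∑ x ∈ nthRootsFinset n (1 : K), x ^ k = 0 := by
  obtain rfl | hn := n.eq_zero_or_pos
  · rw [nthRootsFinset_zero, sum_empty]
  have hζ₀ : ζ ≠ 0 := hζ.ne_zero hn.ne'
  have hmem : ∀ {x : K}, x ∈ nthRootsFinset n (1 : K) ↔ x ^ n = 1 :=
    Polynomial.mem_nthRootsFinset hn 1
  have hrot : ζ ^ k * ∑ x ∈ nthRootsFinset n (1 : K), x ^ k =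
      ∑ x ∈ nthRootsFinset n (1 : K), x ^ k := by
    rw [mul_sum]
    refine sum_nbij' (ζ * ·) (ζ⁻¹ * ·) (fun x hx ↦ ?_) (fun x hx ↦ ?_) (fun x _ ↦ ?_)
      (fun x _ ↦ ?_) (fun x _ ↦ (mul_zpow ζ x k).symm)
    · rw [hmem, mul_pow, hζ.pow_eq_one, hmem.mp hx, one_mul]
    · rw [hmem, mul_pow, inv_pow, hζ.pow_eq_one, hmem.mp hx, inv_one, one_mul]
    · exact inv_mul_cancel_left₀ hζ₀ x
    · exact mul_inv_cancel_left₀ hζ₀ x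
  have hζk : ζ ^ k - 1 ≠ 0 := sub_ne_zero.mpr fun h ↦ hk ((hζ.zpow_eq_one_iff_dvd k).mp h)
  exact (mul_eq_zero.mp (by linear_combination hrot)).resolve_left hζk

variable [DecidableEq K] {R : Finset K}

theorem image_div_offDiag_eq_erase_one (hζ : IsPrimitiveRoot ζ n) (hR : ∀ a ∈ R, a ^ n = 1)
    (hinj : Set.InjOn (fun x : K × K ↦ x.1 / x.2) R.offDiag) (hcard : #R * (#R - 1) + 1 = n) :
    R.offDiag.image (fun x ↦ x.1 / x.2) = (nthRootsFinset n (1 : K)).erase 1 := by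
  have hn : 0 < n := by omega
  refine eq_of_subset_of_card_le (fun x hx ↦ ?_) ?_
  · obtain ⟨⟨a, b⟩, hab, rfl⟩ := mem_image.mp hx
    obtain ⟨ha, hb, hne⟩ := mem_offDiag.mp hab
    have hb₀ : b ≠ 0 := by
      rintro rfl
      simpa [zero_pow hn.ne'] using hR 0 hb
    refine mem_erase.mpr ⟨fun h ↦ hne ((div_eq_one_iff_eq hb₀).mp h), ?_⟩
    rw [mem_nthRootsFinset hn, div_pow, hR a ha, hR b hb, div_one]
  · rw [card_erase_of_mem (one_mem_nthRootsFinset hn), hζ.card_nthRootsFinset,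
      card_image_of_injOn hinj, offDiag_card, ← Nat.mul_sub_one]
    omega

theorem sum_zpow_mul_sum_zpow_neg_eq_card_sub_one (hζ : IsPrimitiveRoot ζ n)
    (hR : ∀ a ∈ R, a ^ n = 1) (hinj : Set.InjOn (fun x : K × K ↦ x.1 / x.2) R.offDiag)
    (hcard : #R * (#R - 1) + 1 = n) {k : ℤ} (hk : ¬ (n : ℤ) ∣ k) :
    (∑ a ∈ R, a ^ k) * ∑ b ∈ R, b ^ (-k) = #R - 1 := by
  have hn : 0 < n := by omega
  have hdiag : ∀ x ∈ R.diag, (x.1 / x.2) ^ k = 1 := by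
    intro x hx
    obtain ⟨ha, heq⟩ := mem_diag.mp hx
    have ha₀ : x.1 ≠ 0 := by
      intro h
      simpa [h, zero_pow hn.ne'] using hR _ ha
    rw [← heq, div_self ha₀, one_zpow]
  calc (∑ a ∈ R, a ^ k) * ∑ b ∈ R, b ^ (-k)
      = ∑ x ∈ R ×ˢ R, (x.1 / x.2) ^ k := by
        rw [sum_mul_sum, sum_product]
        simp only [div_eq_mul_inv, mul_zpow, inv_zpow, zpow_neg]
    _ = ∑ x ∈ R.diag, (x.1 / x.2) ^ k + ∑ x ∈ R.offDiag, (x.1 / x.2) ^ k := by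
        rw [← diag_union_offDiag, sum_union (disjoint_diag_offDiag R)]
    _ = #R + ∑ x ∈ (nthRootsFinset n (1 : K)).erase 1, x ^ k := by
        rw [sum_congr rfl hdiag, sum_const, diag_card, nsmul_one,
          ← image_div_offDiag_eq_erase_one hζ hR hinj hcard, sum_image hinj]
    _ = #R - 1 := by
        rw [sum_erase_eq_sub (one_mem_nthRootsFinset hn), hζ.sum_nthRootsFinset_zpow_eq_zero hk,
          one_zpow, zero_sub, ← sub_eq_add_neg]

end RootsOfUnity

theorem sum_zpow_roots_mul_sum_zpow_neg_eq_zero {K : Type*} [Field K] [IsAlgClosed K]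
    [DecidableEq K] (p : ℕ) [Fact p.Prime] [CharP K p] {t : ℕ} (ht : t ≠ 0) {k : ℤ}
    (hk : ¬ (((p ^ t + 1) * p ^ t + 1 : ℕ) : ℤ) ∣ k) :
    (∑ a ∈ (X ^ (p ^ t + 1) + X + 1 : K[X]).roots.toFinset, a ^ k) *
      ∑ a ∈ (X ^ (p ^ t + 1) + X + 1 : K[X]).roots.toFinset, a ^ (-k) = 0 := by
  have hq : ((p ^ t : ℕ) : K) = 0 := by simp [zero_pow ht]
  have hq₀ : p ^ t ≠ 0 := (pow_pos (Fact.out : p.Prime).pos t).ne'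
  have hroot : ∀ a ∈ (X ^ (p ^ t + 1) + X + 1 : K[X]).roots.toFinset,
      a ^ (p ^ t + 1) = -(a + 1) :=
    fun a ha ↦ pow_eq_neg_add_one_of_mem_roots (Multiset.mem_toFinset.mp ha)
  have hcard := card_roots_toFinset_X_pow_add_X_add_one hq hq₀ (IsAlgClosed.splits _)
  have : NeZero (((p ^ t + 1) * p ^ t + 1 : ℕ) : K) := ⟨by simp [hq]⟩
  obtain ⟨ζ, hζ⟩ := HasEnoughRootsOfUnity.exists_primitiveRoot K ((p ^ t + 1) * p ^ t + 1)
  rw [sum_zpow_mul_sum_zpow_neg_eq_card_sub_one hζ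
    (fun a ha ↦ pow_mul_add_one_eq_one_of_pow_eq_neg_add_one (hroot a ha))
    (injOn_div_offDiag_of_pow_eq_neg_add_one (by omega) hroot) (by rw [hcard]; rfl) hk, hcard]
  simp [hq]

theorem key_lemma (p : ℕ) [Fact p.Prime] (t : ℕ) (ht : 1 ≤ t)
    (r n : ℕ) (hr : r = p ^ t + 1) (hn : n = r * (r - 1) + 1)
    (f : ℤ → ZMod p)
    (hrec : ∀ k : ℤ, f (k + r) = -f k - f (k + 1))
    (h0 : f 0 = 1)
    (hinit : ∀ i : ℤ, 1 ≤ i → i ≤ (r : ℤ) - 1 → f i = 0) :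
    ∀ k : ℤ, ¬ (n : ℤ) ∣ k → f k * f (-k) = 0 := by
  classical
  intro k hk
  subst hr hn
  let K := AlgebraicClosure (ZMod p)
  have hclosed : (fun j ↦ algebraMap (ZMod p) K (f j)) = _ :=
    eq_sum_zpow_roots_of_recurrence (by simp [zero_pow (by omega : t ≠ 0)])
      (pow_pos (Fact.out : p.Prime).pos t).ne' (IsAlgClosed.splits _)
      (fun j ↦ by simp only [hrec, map_sub, map_neg]) (by simp only [h0, map_one])
      fun i h₁ h₂ ↦ by simp only [hinit i h₁ (by push_cast at h₂ ⊢; omega), map_zero]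
  apply (algebraMap (ZMod p) K).injective
  rw [map_mul, map_zero, congrFun hclosed, congrFun hclosed]
  exact sum_zpow_roots_mul_sum_zpow_neg_eq_zero p (by omega) (by rwa [Nat.add_sub_cancel] at hk)
end

section
/- Let f : ℤ → F_p be as above with r = p^t+1, n = r(r-1)+1, and define the n×n matrix M over F_p by M_{k,ℓ} = f(k-ℓ) for k,ℓ ∈ {0,...,n-1}. Then M is a fooling-set matrix: all diagonal entries equal 1 and M_{k,ℓ}·M_{ℓ,k} = 0 for k ≠ ℓ. -/
lemma circ_formula (p q : ℕ) (hq : 1 ≤ q) (f : ℤ → ZMod p)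
    (hrec : ∀ k : ℤ, f (k + ((q : ℤ) + 1)) = -f k - f (k + 1))
    (h0 : f 0 = 1) (hinit : ∀ i : ℤ, 1 ≤ i → i ≤ (q : ℤ) → f i = 0) :
    ∀ k : ℕ, k ≤ q * (q + 1) →
      ((∀ a b : ℕ, 0 < a → a ≤ q → b < a → k + b = a * (q + 1) →
          f k = (-1) ^ a * ((a - 1).choose b : ZMod p))
      ∧ ((k ≠ 0 ∧ ∀ a b : ℕ, 0 < a → a ≤ q → b < a → k + b ≠ a * (q + 1)) → f k = 0)) := by
  intro k
  induction k using Nat.strong_induction_on with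
  | _ k IH =>
  intro hk
  by_cases hk1 : k ≤ q
  · constructor
    · intro a b ha haq hba hab
      exfalso
      have h1 : q ≤ a * q := Nat.le_mul_of_pos_left q ha
      have h2 : a * (q + 1) = a * q + a := by ring
      omega
    · rintro ⟨hk0, -⟩
      apply hinit
      · exact_mod_cast Nat.one_le_iff_ne_zero.mpr hk0
      · exact_mod_cast hk1
  · push_neg at hk1
    set m := k - (q + 1) with hmdef
    have hm : k = m + (q + 1) := by omega
    have hfk : f k = -f m - f (m + 1) := by
      have h := hrec (m : ℤ)
      have e1 : (m : ℤ) + ((q : ℤ) + 1) = (k : ℤ) := by push_cast [hm]; ring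
      have e2 : (m : ℤ) + 1 = ((m + 1 : ℕ) : ℤ) := by push_cast; ring
      rw [e1, e2] at h
      exact h
    have hmlt : m < k := by omega
    have hm1lt : m + 1 < k := by omega
    have hmle : m ≤ q * (q + 1) := by omega
    have hm1le : m + 1 ≤ q * (q + 1) := by omega
    constructor
    · -- pattern case
      intro a b ha haq hba hab
      rcases Nat.lt_or_ge a 2 with ha1 | ha2
      · -- a = 1, b = 0, k = q+1
        have hae : a = 1 := by omega
        have hbe : b = 0 := by omega
        subst hae hbe
        have hke : k = q + 1 := by omega
        have hm0 : m = 0 := by omega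
        have hf1 : f 1 = 0 := hinit 1 le_rfl (by exact_mod_cast hq)
        rw [hfk, hm0]
        push_cast
        rw [h0, hf1]
        norm_num
      · -- a ≥ 2
        obtain ⟨c, rfl⟩ : ∃ c, a = c + 2 := ⟨a - 2, by omega⟩
        have hexp : (c + 2) * (q + 1) = (c + 1) * (q + 1) + (q + 1) := by ring
        have hmeq : m + b = (c + 1) * (q + 1) := by omega
        have hc1q : c + 1 ≤ q := by omega
        rcases Nat.eq_zero_or_pos b with hb0 | hbpos
        · -- b = 0
          subst hb0
          have hfm : f m = (-1) ^ (c + 1) * (((c + 1 - 1).choose 0 : ℕ) : ZMod p) :=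
            (IH m hmlt hmle).1 (c + 1) 0 (by omega) hc1q (by omega) (by omega)
          have hfm1 : f (m + 1) = 0 := by
            apply (IH (m + 1) hm1lt hm1le).2
            refine ⟨by omega, ?_⟩
            intro a' b' ha' ha'q hb'a' habs
            rcases Nat.lt_or_ge a' (c + 2) with hlt | hge
            · have hle : a' * (q + 1) ≤ (c + 1) * (q + 1) :=
                Nat.mul_le_mul_right _ (by omega)
              omega
            · have hle : (c + 2) * (q + 1) ≤ a' * (q + 1) :=
                Nat.mul_le_mul_right _ hge
              omega
          rw [hfk, hfm, hfm1]
          simp only [Nat.choose_zero_right, Nat.cast_one, mul_one, sub_zero]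
          rw [show c + 2 = (c + 1) + 1 from rfl, pow_succ]
          ring
        · -- b ≥ 1
          obtain ⟨d, rfl⟩ : ∃ d, b = d + 1 := ⟨b - 1, by omega⟩
          have hfm1 : f (m + 1) = (-1) ^ (c + 1) * (((c + 1 - 1).choose d : ℕ) : ZMod p) :=
            (IH (m + 1) hm1lt hm1le).1 (c + 1) d (by omega) hc1q (by omega) (by omega)
          rcases Nat.lt_or_ge (d + 1) (c + 1) with hdlt | hdge
          · -- middle case: Pascal
            have hfm : f m = (-1) ^ (c + 1) * (((c + 1 - 1).choose (d + 1) : ℕ) : ZMod p) :=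
              (IH m hmlt hmle).1 (c + 1) (d + 1) (by omega) hc1q hdlt (by omega)
            rw [hfk, hfm, hfm1]
            have hpas : (c + 2 - 1).choose (d + 1)
                = (c + 1 - 1).choose d + (c + 1 - 1).choose (d + 1) := by
              simp [Nat.choose_succ_succ]
            rw [hpas]
            push_cast
            rw [show c + 2 = (c + 1) + 1 from rfl, pow_succ]
            ring
          · -- b = a - 1
            have hde : d = c := by omega
            subst hde
            have hfm : f m = 0 := by
              apply (IH m hmlt hmle).2
              constructor
              · have hle : 1 * (q + 1) ≤ (d + 1) * (q + 1) := Nat.mul_le_mul_right _ (by omega)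
                omega
              · intro a' b' ha' ha'q hb'a' habs
                rcases Nat.lt_or_ge a' (d + 1) with hlt | hge
                · have hle : (a' + 1) * (q + 1) ≤ (d + 1) * (q + 1) :=
                    Nat.mul_le_mul_right _ (by omega)
                  have hexp2 : (a' + 1) * (q + 1) = a' * (q + 1) + (q + 1) := by ring
                  omega
                · rcases Nat.eq_or_lt_of_le hge with heq | hlt2
                  · rw [heq] at hmeq
                    omega
                  · have hle : (d + 2) * (q + 1) ≤ a' * (q + 1) :=
                      Nat.mul_le_mul_right _ (by omega)
                    have hb'q : b' ≤ q := by omega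
                    omega
            rw [hfk, hfm, hfm1]
            have e1 : (d + 1 - 1).choose d = 1 := by simp
            have e2 : (d + 2 - 1).choose (d + 1) = 1 := by simp
            rw [e1, e2]
            push_cast
            rw [show d + 2 = (d + 1) + 1 from rfl, pow_succ]
            ring
    · -- non-pattern case
      rintro ⟨hk0, hnp⟩
      have hq1pat : k ≠ q + 1 := by
        intro hke
        exact hnp 1 0 (by omega) hq (by omega) (by omega)
      have hfm : f m = 0 := by
        apply (IH m hmlt hmle).2
        constructor
        · omega
        · intro a b ha haq hba habs
          have hexp2 : (a + 1) * (q + 1) = a * (q + 1) + (q + 1) := by ring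
          rcases Nat.eq_or_lt_of_le haq with heq | hlt
          · rw [heq] at habs hba
            omega
          · exact hnp (a + 1) b (by omega) hlt (by omega) (by omega)
      have hfm1 : f (m + 1) = 0 := by
        apply (IH (m + 1) hm1lt hm1le).2
        constructor
        · omega
        · intro a b ha haq hba habs
          have hexp2 : (a + 1) * (q + 1) = a * (q + 1) + (q + 1) := by ring
          rcases Nat.eq_or_lt_of_le haq with heq | hlt
          · rw [heq] at habs hba
            omega
          · exact hnp (a + 1) (b + 1) (by omega) hlt (by omega) (by omega)
      rw [hfk, hfm, hfm1]
      ring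


lemma circ_zero (p q : ℕ) (hq : 1 ≤ q) (g : ℤ → ZMod p)
    (hrec : ∀ k : ℤ, g (k + ((q : ℤ) + 1)) = -g k - g (k + 1))
    (hinit : ∀ i : ℤ, 0 ≤ i → i ≤ (q : ℤ) → g i = 0) :
    ∀ k : ℤ, g k = 0 := by
  have key : ∀ N : ℕ, ∀ k : ℤ, -(N : ℤ) ≤ k → k ≤ (q : ℤ) + N → g k = 0 := by
    intro N
    induction N with
    | zero => intro k h1 h2; exact hinit k (by omega) (by omega)
    | succ N IH =>
      intro k h1 h2
      push_cast at h1 h2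
      by_cases hc1 : k = (q : ℤ) + N + 1
      · have e : k = (k - ((q : ℤ) + 1)) + ((q : ℤ) + 1) := by ring
        rw [e, hrec]
        rw [IH (k - ((q : ℤ) + 1)) (by omega) (by omega),
          IH (k - ((q : ℤ) + 1) + 1) (by omega) (by omega)]
        ring
      · by_cases hc2 : k = -(N : ℤ) - 1
        · have h := hrec k
          rw [IH (k + ((q : ℤ) + 1)) (by omega) (by omega),
            IH (k + 1) (by omega) (by omega)] at h
          linear_combination h
        · exact IH k (by omega) (by omega)
  intro k
  exact key (k.natAbs) k (by omega) (by omega)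

lemma circ_neg_one_pow (p t : ℕ) [Fact p.Prime] : ((-1 : ZMod p)) ^ (p ^ t + 1) = 1 := by
  rcases (Fact.out : p.Prime).eq_two_or_odd' with h | h
  · have h2 : ((-1 : ZMod p)) = 1 := by
      subst h; rfl
    rw [h2, one_pow]
  · exact Even.neg_one_pow (Odd.add_one (h.pow))

lemma circ_pascal (n k : ℕ) (hn : 1 ≤ n) (hk : 1 ≤ k) (hkn : k ≤ n) :
    n.choose k = (n - 1).choose (k - 1) + (n - 1).choose k := by
  obtain ⟨n', rfl⟩ : ∃ m, n = m + 1 := ⟨n - 1, by omega⟩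
  obtain ⟨k', rfl⟩ : ∃ m, k = m + 1 := ⟨k - 1, by omega⟩
  simp [Nat.choose_succ_succ]

lemma circ_periodic (p t q : ℕ) [Fact p.Prime] (hq : q = p ^ t) (f : ℤ → ZMod p)
    (hrec : ∀ k : ℤ, f (k + ((q : ℤ) + 1)) = -f k - f (k + 1))
    (h0 : f 0 = 1) (hinit : ∀ i : ℤ, 1 ≤ i → i ≤ (q : ℤ) → f i = 0) :
    ∀ k : ℤ, f (k + ((q * (q + 1) + 1 : ℕ) : ℤ)) = f k := by
  haveI : NeZero p := ⟨(Fact.out : p.Prime).ne_zero⟩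
  have hq1 : 1 ≤ q := by
    rw [hq]; exact Nat.one_le_pow t p (Fact.out : p.Prime).pos
  have F := circ_formula p q hq1 f hrec h0 hinit
  have e : q * (q + 1) = q * q + q := by ring
  have sign : ((-1 : ZMod p)) ^ (q + 1) = 1 := by rw [hq]; exact circ_neg_one_pow p t
  have sign' : ((-1 : ZMod p)) ^ q = -1 := by
    rw [pow_succ] at sign
    linear_combination (-1 : ZMod p) * sign
  have hdvd : ∀ j : ℕ, j ≠ 0 → j < q → ((q.choose j : ℕ) : ZMod p) = 0 := by
    intro j hj0 hjq
    rw [hq] at hjq ⊢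
    exact (ZMod.natCast_eq_zero_iff _ p).mpr
      ((Fact.out : p.Prime).dvd_choose_pow hj0 (by omega))
  -- f(q*q) = 0
  have hA : f ((q * q : ℕ) : ℤ) = 0 := by
    apply (F (q * q) (by omega)).2
    constructor
    · have h1 : 1 * 1 ≤ q * q := Nat.mul_le_mul hq1 hq1
      omega
    · intro a b ha haq hba hab
      rcases Nat.eq_or_lt_of_le haq with heq | hlt
      · rw [heq] at hab hba; omega
      · have hle : (a + 1) * (q + 1) ≤ q * (q + 1) := Nat.mul_le_mul_right _ (by omega)
        have hexp : (a + 1) * (q + 1) = a * (q + 1) + (q + 1) := by ring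
        omega
  -- f(q*q + j) for 1 ≤ j ≤ q
  have hD : ∀ j : ℕ, 1 ≤ j → j ≤ q →
      f ((q * q + j : ℕ) : ℤ) = (-1) ^ q * (((q - 1).choose (q - j) : ℕ) : ZMod p) := by
    intro j h1 h2
    have h3 := (F (q * q + j) (by omega)).1 q (q - j) (by omega) le_rfl (by omega) (by omega)
    exact h3
  -- generic recurrence step on naturals
  have hstep : ∀ j : ℕ, f ((j + q + 1 : ℕ) : ℤ) = -f ((j : ℕ) : ℤ) - f ((j + 1 : ℕ) : ℤ) := by
    intro j
    have h := hrec (j : ℤ)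
    have e1 : (j : ℤ) + ((q : ℤ) + 1) = ((j + q + 1 : ℕ) : ℤ) := by push_cast; ring
    have e2 : (j : ℤ) + 1 = ((j + 1 : ℕ) : ℤ) := by push_cast; ring
    rw [e1, e2] at h
    exact h
  -- f(n) = 1
  have hfn : f ((q * (q + 1) + 1 : ℕ) : ℤ) = 1 := by
    have h := hstep (q * q)
    have e3 : ((q * q + q + 1 : ℕ) : ℤ) = ((q * (q + 1) + 1 : ℕ) : ℤ) := by push_cast; ring
    have hB := hD 1 le_rfl hq1
    rw [e3, hA, hB] at h
    rw [h, Nat.choose_self, sign']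
    push_cast
    ring
  -- f(n + i) = 0 for 1 ≤ i ≤ q - 1
  have hmid : ∀ i : ℕ, 1 ≤ i → i ≤ q - 1 → f ((q * (q + 1) + 1 + i : ℕ) : ℤ) = 0 := by
    intro i h1 h2
    have h := hstep (q * q + i)
    have e3 : ((q * q + i + q + 1 : ℕ) : ℤ) = ((q * (q + 1) + 1 + i : ℕ) : ℤ) := by
      push_cast; ring
    have e4 : ((q * q + i + 1 : ℕ) : ℤ) = ((q * q + (i + 1) : ℕ) : ℤ) := by push_cast; ring
    rw [e3, e4, hD i h1 (by omega), hD (i + 1) (by omega) (by omega)] at h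
    have hcs : q.choose (q - i) = (q - 1).choose (q - i - 1) + (q - 1).choose (q - i) :=
      circ_pascal q (q - i) hq1 (by omega) (by omega)
    have hz : (((q - 1).choose (q - i) : ℕ) : ZMod p)
        + (((q - 1).choose (q - i - 1) : ℕ) : ZMod p) = 0 := by
      have h5 := hdvd (q - i) (by omega) (by omega)
      rw [hcs] at h5
      push_cast at h5
      linear_combination h5
    have e7 : q - (i + 1) = q - i - 1 := by omega
    rw [e7] at h
    rw [h]
    linear_combination -((-1 : ZMod p) ^ q) * hz
  -- f(n + q) = 0
  have hlast : f ((q * (q + 1) + 1 + q : ℕ) : ℤ) = 0 := by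
    have h := hstep (q * (q + 1))
    have e3 : ((q * (q + 1) + q + 1 : ℕ) : ℤ) = ((q * (q + 1) + 1 + q : ℕ) : ℤ) := by
      push_cast; ring
    have hC : f ((q * (q + 1) : ℕ) : ℤ) = (-1) ^ q := by
      have h4 := hD q hq1 le_rfl
      have e4 : ((q * q + q : ℕ) : ℤ) = ((q * (q + 1) : ℕ) : ℤ) := by push_cast; ring
      rw [e4] at h4
      simpa using h4
    rw [e3, hC, hfn] at h
    rw [h, sign']
    ring
  -- now deduce periodicity
  have main : ∀ k : ℤ, f (k + ((q * (q + 1) + 1 : ℕ) : ℤ)) - f k = 0 := by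
    apply circ_zero p q hq1
    · intro k
      have h1 := hrec (k + ((q * (q + 1) + 1 : ℕ) : ℤ))
      have h2 := hrec k
      have e1 : k + ((q * (q + 1) + 1 : ℕ) : ℤ) + ((q : ℤ) + 1)
          = k + ((q : ℤ) + 1) + ((q * (q + 1) + 1 : ℕ) : ℤ) := by ring
      have e2 : k + ((q * (q + 1) + 1 : ℕ) : ℤ) + 1
          = k + 1 + ((q * (q + 1) + 1 : ℕ) : ℤ) := by ring
      rw [e1, e2] at h1
      linear_combination h1 - h2
    · intro i hi0 hiq
      lift i to ℕ using hi0 with j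
      have hjq : j ≤ q := by exact_mod_cast hiq
      rcases Nat.eq_zero_or_pos j with hj0 | hjpos
      · subst hj0
        have e1 : ((0 : ℕ) : ℤ) + ((q * (q + 1) + 1 : ℕ) : ℤ) = ((q * (q + 1) + 1 : ℕ) : ℤ) := by
          push_cast; ring
        rw [e1, hfn]
        simp [h0]
      · have hfj : f ((j : ℕ) : ℤ) = 0 := by
          apply hinit <;> [exact_mod_cast hjpos; exact_mod_cast hjq]
        rcases Nat.eq_or_lt_of_le hjq with hje | hjlt
        · subst hje
          have e1 : ((j : ℕ) : ℤ) + ((j * (j + 1) + 1 : ℕ) : ℤ)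
              = ((j * (j + 1) + 1 + j : ℕ) : ℤ) := by push_cast; ring
          rw [e1, hlast, hfj]
          ring
        · have e1 : ((j : ℕ) : ℤ) + ((q * (q + 1) + 1 : ℕ) : ℤ)
              = ((q * (q + 1) + 1 + j : ℕ) : ℤ) := by push_cast; ring
          rw [e1, hmid j hjpos (by omega), hfj]
          ring
  intro k
  exact sub_eq_zero.mp (main k)


theorem circulant_fooling (p : ℕ) [Fact p.Prime] (t : ℕ) (ht : 1 ≤ t)
    (r n : ℕ) (hr : r = p ^ t + 1) (hn : n = r * (r - 1) + 1)
    (f : ℤ → ZMod p)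
    (hrec : ∀ k : ℤ, f (k + r) = -f k - f (k + 1))
    (h0 : f 0 = 1)
    (hinit : ∀ i : ℤ, 1 ≤ i → i ≤ (r : ℤ) - 1 → f i = 0)
    (M : Matrix (Fin n) (Fin n) (ZMod p))
    (hM : ∀ k l : Fin n, M k l = f ((k : ℤ) - (l : ℤ))) :
    (∀ k, M k k = 1) ∧ (∀ k l, k ≠ l → M k l * M l k = 0) := by
  set q := p ^ t with hqdef
  have hq1 : 1 ≤ q := Nat.one_le_pow t p (Fact.out : p.Prime).pos
  have hrq : r = q + 1 := hr
  have hrec' : ∀ k : ℤ, f (k + ((q : ℤ) + 1)) = -f k - f (k + 1) := by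
    intro k
    have h := hrec k
    have e : (r : ℤ) = (q : ℤ) + 1 := by rw [hrq]; push_cast; ring
    rw [e] at h
    exact h
  have hinit' : ∀ i : ℤ, 1 ≤ i → i ≤ (q : ℤ) → f i = 0 := by
    intro i h1 h2
    apply hinit i h1
    rw [hrq]
    push_cast
    omega
  have hnq : n = q * (q + 1) + 1 := by
    rw [hn, hrq]
    simp [Nat.add_sub_cancel, Nat.mul_comm]
  have per := circ_periodic p t q hqdef f hrec' h0 hinit'
  have F := circ_formula p q hq1 f hrec' h0 hinit'
  have supp : ∀ d : ℕ, d ≠ 0 → d ≤ q * (q + 1) → f (d : ℤ) ≠ 0 →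
      ∃ a b : ℕ, 0 < a ∧ a ≤ q ∧ b < a ∧ d + b = a * (q + 1) := by
    intro d hd0 hdle hfd
    by_contra hno
    push_neg at hno
    exact hfd ((F d hdle).2 ⟨hd0, fun a b ha haq hba => hno a b ha haq hba⟩)
  have key : ∀ d : ℤ, 0 < d → d < (n : ℤ) → f d * f (-d) = 0 := by
    intro d hd0 hdn
    lift d to ℕ using le_of_lt hd0 with d'
    by_contra hne
    have h1 : f (d' : ℤ) ≠ 0 := fun h => hne (by rw [h, zero_mul])
    have h2 : f (-(d' : ℤ)) ≠ 0 := fun h => hne (by rw [h, mul_zero])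
    have hd'0 : d' ≠ 0 := by
      intro h
      rw [h] at hd0
      simp at hd0
    have hd'n : d' < n := by exact_mod_cast hdn
    have hper := per (-(d' : ℤ))
    have e1 : -(d' : ℤ) + ((q * (q + 1) + 1 : ℕ) : ℤ) = ((n - d' : ℕ) : ℤ) := by
      rw [Nat.cast_sub hd'n.le, hnq]
      push_cast
      ring
    rw [e1] at hper
    rw [← hper] at h2
    obtain ⟨a, b, ha, haq, hba, hab⟩ := supp d' hd'0 (by omega) h1
    obtain ⟨a', b', ha', ha'q, hb'a', hab'⟩ := supp (n - d') (by omega) (by omega) h2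
    have hsum : a * (q + 1) + a' * (q + 1) = q * (q + 1) + 1 + (b + b') := by omega
    have hcomb : (a + a') * (q + 1) = a * (q + 1) + a' * (q + 1) := by ring
    have hgt : q + 1 ≤ a + a' := by
      by_contra hle
      push_neg at hle
      have hle2 : (a + a') * (q + 1) ≤ q * (q + 1) := Nat.mul_le_mul_right _ (by omega)
      omega
    rcases Nat.eq_or_lt_of_le hgt with heq | hlt
    · have e3 : (q + 1) * (q + 1) = q * (q + 1) + q + 1 := by ring
      rw [← heq] at hcomb
      omega
    · have hge : (q + 2) * (q + 1) ≤ (a + a') * (q + 1) :=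
        Nat.mul_le_mul_right _ (by omega)
      have e2 : (q + 2) * (q + 1) = q * (q + 1) + 2 * q + 2 := by ring
      omega
  have hbnd : ∀ x : Fin n, 0 ≤ (x : ℤ) ∧ (x : ℤ) < n :=
    fun x => ⟨Int.natCast_nonneg _, by exact_mod_cast x.isLt⟩
  constructor
  · intro k
    rw [hM k k, sub_self]
    exact h0
  · intro k l hkl
    rw [hM k l, hM l k]
    obtain ⟨hk0, hkn⟩ := hbnd k
    obtain ⟨hl0, hln⟩ := hbnd l
    rcases lt_trichotomy ((k : ℤ) - (l : ℤ)) 0 with hlt | heq | hgt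
    · have hkey := key ((l : ℤ) - (k : ℤ)) (by omega) (by omega)
      rw [show -((l : ℤ) - (k : ℤ)) = (k : ℤ) - (l : ℤ) by ring] at hkey
      rw [mul_comm]
      exact hkey
    · exfalso
      apply hkl
      have : (k : ℕ) = (l : ℕ) := by omega
      exact Fin.ext this
    · have hkey := key ((k : ℤ) - (l : ℤ)) (by omega) (by omega)
      rw [show -((k : ℤ) - (l : ℤ)) = (l : ℤ) - (k : ℤ) by ring] at hkey
      exact hkey
end

section
/- Let f : ℤ → F_p satisfy the recurrence f(k+r) = -f(k) - f(k+1), and define the n×n matrix M by M_{k,ℓ} = f(k-ℓ) for 0 ≤ k,ℓ ≤ n-1, where n > r. Then rank M ≤ r. -/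
/-!
Row `r + a` of `M` is `-(row a) - (row (a + 1))`, because `(r + a) - ℓ = (a - ℓ) + r`; since
`r ≥ 2` both of these rows come earlier. By strong induction every row lies in the span of the
first `r` rows, so the row space has dimension at most `r`.
-/

open Submodule

theorem Submodule.span_range_le_span_image_of_mem_span_image_Iio {R V ι : Type*} [Semiring R]
    [AddCommMonoid V] [Module R V] [Preorder ι] [WellFoundedLT ι] {v : ι → V} {s : Set ι}
    (h : ∀ i ∉ s, v i ∈ span R (v '' Set.Iio i)) :
    span R (Set.range v) ≤ span R (v '' s) := by
  refine span_le.mpr ?_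
  rintro _ ⟨i, rfl⟩
  induction i using WellFoundedLT.induction with
  | _ i ih =>
    by_cases hi : i ∈ s
    · exact subset_span ⟨i, hi, rfl⟩
    · refine span_le.mpr ?_ (h i hi)
      rintro _ ⟨j, hj, rfl⟩
      exact ih j hj

theorem Matrix.rank_le_of_row_mem_span_image_Iio {K ι : Type*} [Field K] [Fintype ι] {m r : ℕ}
    {M : Matrix (Fin m) ι K}
    (h : ∀ i : Fin m, r ≤ (i : ℕ) → M.row i ∈ span K (M.row '' Set.Iio i)) :
    M.rank ≤ r := by
  classical
  let first : Finset (Fin m) := {i | (i : ℕ) < r}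
  have hspan : span K (Set.range M.row) ≤ span K ↑(first.image M.row) := by
    rw [Finset.coe_image]
    exact span_range_le_span_image_of_mem_span_image_Iio fun i hi =>
      h i (not_lt.mp (by simpa [first] using hi))
  calc M.rank = Module.finrank K (span K (Set.range M.row)) := M.rank_eq_finrank_span_row
    _ ≤ (first.image M.row).card := (finrank_mono hspan).trans (finrank_span_finset_le_card _)
    _ ≤ first.card := Finset.card_image_le
    _ ≤ r := by simp [first, Fin.card_filter_val_lt]

theorem circulant_rank_le_general (p : ℕ) [Fact p.Prime] (r n : ℕ) (hr : 2 ≤ r)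
    (f : ℤ → ZMod p)
    (hrec : ∀ k : ℤ, f (k + r) = -f k - f (k + 1))
    (M : Matrix (Fin n) (Fin n) (ZMod p))
    (hM : ∀ k l : Fin n, M k l = f ((k : ℤ) - (l : ℤ))) :
    M.rank ≤ r := by
  refine Matrix.rank_le_of_row_mem_span_image_Iio fun i hi => ?_
  obtain ⟨a, hia⟩ := Nat.exists_eq_add_of_le hi
  let earlier (j : ℕ) (hj : j < i) : Fin n := ⟨j, hj.trans i.2⟩
  have ha : a < i := by omega
  have ha' : a + 1 < i := by omega
  have hrow : M.row i = -M.row (earlier a ha) - M.row (earlier (a + 1) ha') := by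
    funext l
    have hshift : ((i : ℕ) : ℤ) - l = (a - l : ℤ) + r := by omega
    simp only [Matrix.row, Pi.sub_apply, Pi.neg_apply, hM, hshift, hrec]
    congr 2
    push_cast [earlier]
    ring
  have hspan (j : ℕ) (hj : j < i) : M.row (earlier j hj) ∈ span (ZMod p) (M.row '' Set.Iio i) :=
    subset_span ⟨earlier j hj, hj, rfl⟩
  rw [hrow]
  exact sub_mem (neg_mem (hspan a ha)) (hspan (a + 1) ha')

theorem circulant_rank_le (p : ℕ) [Fact p.Prime] (r n : ℕ) (hr : 2 ≤ r) (hn : r < n)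
    (f : ℤ → ZMod p)
    (hrec : ∀ k : ℤ, f (k + r) = -f k - f (k + 1))
    (M : Matrix (Fin n) (Fin n) (ZMod p))
    (hM : ∀ k l : Fin n, M k l = f ((k : ℤ) - (l : ℤ))) :
    M.rank ≤ r :=
  circulant_rank_le_general p r n hr f hrec M hM
end

section
/- Let f : ℤ → F_p be defined by f(k+r) = -f(k)-f(k+1), f(0)=1, f(1)=...=f(r-1)=0, and M the n×n matrix M_{k,ℓ} = f(k-ℓ). Then M has rank exactly r, since its top-left r×r submatrix is upper triangular with nonzero diagonal. -/
/-!
The columns of `M` obey the same recurrence as `f`: column `ℓ + r` is minus the sum of columns `ℓ`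
and `ℓ + r - 1`. Hence every column lies in the span of the first `r`, and `rank M ≤ r`. Conversely,
the top-left `r × r` block has entries `f (k - ℓ)`, which vanish for `0 < k - ℓ < r` and equal `1`
on the diagonal, so it is upper unitriangular, hence invertible, and `r ≤ rank M`.
-/

open Matrix Submodule

theorem Submodule.mem_span_range_of_mem_span_range_lt {R V : Type*} [Semiring R]
    [AddCommMonoid V] [Module R V] (v : ℕ → V) (r : ℕ)
    (hv : ∀ ℓ, r ≤ ℓ → v ℓ ∈ span R (Set.range fun i : Fin ℓ => v i)) (ℓ : ℕ) :
    v ℓ ∈ span R (Set.range fun i : Fin r => v i) := by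
  induction ℓ using Nat.strong_induction_on with
  | _ ℓ ih =>
    by_cases hℓ : ℓ < r
    · exact subset_span ⟨⟨ℓ, hℓ⟩, rfl⟩
    · refine span_le.mpr ?_ (hv ℓ (not_lt.mp hℓ))
      rintro _ ⟨i, rfl⟩
      exact ih i i.isLt

def toeplitz {α : Type*} (f : ℤ → α) (n : ℕ) : Matrix (Fin n) (Fin n) α :=
  Matrix.of fun k l => f ((k : ℤ) - l)

theorem isUpperTriangular_toeplitz {α : Type*} [Zero α] {f : ℤ → α} {r : ℕ}
    (hinit : ∀ i : ℤ, 1 ≤ i → i ≤ (r : ℤ) - 1 → f i = 0) :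
    (toeplitz f r).IsUpperTriangular := by
  intro i j hji
  have := i.isLt
  exact hinit _ (by simp at hji; omega) (by omega)

section Toeplitz

variable {R : Type*} [CommRing R] {f : ℤ → R} {r n : ℕ}

theorem det_toeplitz_eq_one (h0 : f 0 = 1)
    (hinit : ∀ i : ℤ, 1 ≤ i → i ≤ (r : ℤ) - 1 → f i = 0) : (toeplitz f r).det = 1 := by
  rw [det_of_isUpperTriangular (isUpperTriangular_toeplitz hinit)]
  simp [toeplitz, h0]

theorem le_rank_toeplitz [StrongRankCondition R] (h : r ≤ n) (h0 : f 0 = 1)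
    (hinit : ∀ i : ℤ, 1 ≤ i → i ≤ (r : ℤ) - 1 → f i = 0) : r ≤ (toeplitz f n).rank := by
  have hunit : IsUnit (toeplitz f r) := by
    rw [isUnit_iff_isUnit_det, det_toeplitz_eq_one h0 hinit]
    exact isUnit_one
  calc r = (toeplitz f r).rank := by rw [rank_of_isUnit _ hunit, Fintype.card_fin]
    _ = ((toeplitz f n).submatrix (Fin.castLE h) (Fin.castLE h)).rank := rfl
    _ ≤ (toeplitz f n).rank := rank_submatrix_le _ _ _

theorem rank_toeplitz_le [StrongRankCondition R] (hr : 1 ≤ r)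
    (hrec : ∀ k : ℤ, f (k + r) = -f k - f (k + 1)) : (toeplitz f n).rank ≤ r := by
  let v : ℕ → Fin n → R := fun ℓ k => f (k - ℓ)
  have hv_rec : ∀ j, v (j + r) = -v j - v (j + r - 1) := by
    intro j
    funext k
    have hk := hrec (k - (j + r : ℕ))
    rw [show (k : ℤ) - (j + r : ℕ) + r = k - j by push_cast; ring,
      show (k : ℤ) - (j + r : ℕ) + 1 = k - (j + r - 1 : ℕ) by omega] at hk
    simp only [v, Pi.sub_apply, Pi.neg_apply, hk]
    ring
  have hv : ∀ ℓ, r ≤ ℓ → v ℓ ∈ span R (Set.range fun i : Fin ℓ => v i) := by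
    intro ℓ hℓ
    obtain ⟨j, rfl⟩ := Nat.exists_eq_add_of_le' hℓ
    rw [hv_rec]
    exact sub_mem (neg_mem (subset_span ⟨⟨j, by omega⟩, rfl⟩))
      (subset_span ⟨⟨j + r - 1, by omega⟩, rfl⟩)
  have hcols : Set.range (toeplitz f n).col ⊆ span R (Set.range fun i : Fin r => v i) := by
    rintro _ ⟨l, rfl⟩
    exact mem_span_range_of_mem_span_range_lt v r hv l
  have := Module.Finite.span_of_finite R (Set.finite_range fun i : Fin r => v i)
  calc (toeplitz f n).rank ≤ (Set.range fun i : Fin r => v i).finrank R := by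
        rw [rank_eq_finrank_span_cols]
        exact finrank_mono (span_le.mpr hcols)
    _ ≤ r := (finrank_range_le_card _).trans (Fintype.card_fin r).le

end Toeplitz

theorem circulant_rank_eq (p : ℕ) [Fact p.Prime] (r n : ℕ) (hr : 2 ≤ r) (hn : r < n)
    (f : ℤ → ZMod p)
    (hrec : ∀ k : ℤ, f (k + r) = -f k - f (k + 1))
    (h0 : f 0 = 1)
    (hinit : ∀ i : ℤ, 1 ≤ i → i ≤ (r : ℤ) - 1 → f i = 0)
    (M : Matrix (Fin n) (Fin n) (ZMod p))
    (hM : ∀ k l : Fin n, M k l = f ((k : ℤ) - (l : ℤ))) :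
    M.rank = r := by
  obtain rfl : M = toeplitz f n := Matrix.ext hM
  exact le_antisymm (rank_toeplitz_le (by omega) hrec) (le_rank_toeplitz hn.le h0 hinit)
end

section
/- With f as above (f(k+r) = -f(k)-f(k+1), f(0)=1, f(1)=...=f(r-1)=0) and h(j,i) = f((j+1)r - i), one has h(j,i) = (-1)^{j+1}·C(j,i) in F_p for all 0 ≤ i ≤ j ≤ r-2, where C(j,i) is the binomial coefficient. -/
/-!
Read row `j` as the values `f ((j + 1) r - i)` for all `0 ≤ i ≤ r - 1`, not just `i ≤ j`: they
equal `(-1) ^ (j + 1) C(j, i)`, the entries with `i > j` being zero. In this extended form the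
claim passes from `j` to `j + 1`: the recurrence at `k = (j + 1) r - i` is Pascal's rule for
`i ≥ 1`, and for `i = 0` it needs `f ((j + 1) r + 1) = 0`, which the recurrence at `k = j r + 1`
reduces to the zero entries `i = r - 1, r - 2` of row `j` (available as long as `j + 3 ≤ r`).
-/

variable {R : Type*} [CommRing R] {r : ℕ} {f : ℤ → R}

def BinomialRow (f : ℤ → R) (r j : ℕ) : Prop :=
  ∀ i : ℕ, i < r → f (((j : ℤ) + 1) * r - i) = (-1) ^ (j + 1) * (j.choose i : R)

theorem binomialRow_zero (hrec : ∀ k : ℤ, f (k + r) = -f k - f (k + 1)) (h0 : f 0 = 1)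
    (hinit : ∀ i : ℤ, 1 ≤ i → i ≤ (r : ℤ) - 1 → f i = 0) (hr : 2 ≤ r) : BinomialRow f r 0 := by
  intro i hi
  rcases i with _ | i
  · have h1 : f 1 = 0 := hinit 1 le_rfl (by omega)
    simpa [h0, h1] using hrec 0
  · simpa using hinit (r - (i + 1 : ℕ)) (by omega) (by omega)

namespace BinomialRow

variable {j : ℕ}

theorem apply_sub_eq_zero (hrow : BinomialRow f r j) {i : ℕ} (hji : j < i) (hi : i < r) :
    f (((j : ℤ) + 1) * r - i) = 0 := by
  rw [hrow i hi, Nat.choose_eq_zero_of_lt hji, Nat.cast_zero, mul_zero]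

theorem apply_mul_add_one_eq_zero (hrec : ∀ k : ℤ, f (k + r) = -f k - f (k + 1))
    (hrow : BinomialRow f r j) (hj : j + 3 ≤ r) : f (((j : ℤ) + 1) * r + 1) = 0 := by
  have h1 := hrow.apply_sub_eq_zero (i := r - 1) (by omega) (by omega)
  have h2 := hrow.apply_sub_eq_zero (i := r - 2) (by omega) (by omega)
  push_cast [Nat.cast_sub (by omega : 1 ≤ r), Nat.cast_sub (by omega : 2 ≤ r)] at h1 h2
  rw [show ((j : ℤ) + 1) * r + 1 = (j : ℤ) * r + 1 + r by ring, hrec,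
    show (j : ℤ) * r + 1 = ((j : ℤ) + 1) * r - (r - 1) by ring, h1,
    show ((j : ℤ) + 1) * r - (r - 1) + 1 = ((j : ℤ) + 1) * r - (r - 2) by ring, h2]
  simp

theorem succ (hrec : ∀ k : ℤ, f (k + r) = -f k - f (k + 1)) (hrow : BinomialRow f r j)
    (hj : j + 3 ≤ r) : BinomialRow f r (j + 1) := by
  intro i hi
  have hstep := hrec (((j : ℤ) + 1) * r - i)
  rw [show ((j : ℤ) + 1) * r - i + r = (((j + 1 : ℕ) : ℤ) + 1) * r - i by push_cast; ring]
    at hstep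
  rw [hstep, hrow i hi]
  rcases i with _ | i
  · rw [Nat.cast_zero, sub_zero, hrow.apply_mul_add_one_eq_zero hrec hj]
    simp [pow_succ]
  · rw [show ((j : ℤ) + 1) * r - ((i + 1 : ℕ) : ℤ) + 1 = ((j : ℤ) + 1) * r - i by push_cast; ring,
      hrow i (by omega), Nat.choose_succ_succ']
    push_cast
    ring

end BinomialRow

theorem binomialRow_of_add_two_le (hrec : ∀ k : ℤ, f (k + r) = -f k - f (k + 1)) (h0 : f 0 = 1)
    (hinit : ∀ i : ℤ, 1 ≤ i → i ≤ (r : ℤ) - 1 → f i = 0) {j : ℕ} (hj : j + 2 ≤ r) :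
    BinomialRow f r j := by
  induction j with
  | zero => exact binomialRow_zero hrec h0 hinit hj
  | succ j ih => exact (ih (by omega)).succ hrec (by omega)

theorem h_binomial_general (p : ℕ) (r : ℕ)
    (f : ℤ → ZMod p)
    (hrec : ∀ k : ℤ, f (k + r) = -f k - f (k + 1))
    (h0 : f 0 = 1)
    (hinit : ∀ i : ℤ, 1 ≤ i → i ≤ (r : ℤ) - 1 → f i = 0) :
    ∀ j i : ℕ, i ≤ j → (j : ℤ) ≤ (r : ℤ) - 2 →
      f (((j : ℤ) + 1) * r - i) = (-1) ^ (j + 1) * (Nat.choose j i : ZMod p) := by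
  intro j i hij hjr
  exact binomialRow_of_add_two_le hrec h0 hinit (by omega) i (by omega)

theorem h_binomial (p : ℕ) [Fact p.Prime] (r : ℕ) (hr : 2 ≤ r)
    (f : ℤ → ZMod p)
    (hrec : ∀ k : ℤ, f (k + r) = -f k - f (k + 1))
    (h0 : f 0 = 1)
    (hinit : ∀ i : ℤ, 1 ≤ i → i ≤ (r : ℤ) - 1 → f i = 0) :
    ∀ j i : ℕ, i ≤ j → (j : ℤ) ≤ (r : ℤ) - 2 →
      f (((j : ℤ) + 1) * r - i) = (-1) ^ (j + 1) * (Nat.choose j i : ZMod p) :=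
  h_binomial_general p r f hrec h0 hinit
end

section
/- For every prime p and integer t ≥ 1, with r = p^t + 1 and n = r(r-1)+1, there exists an n×n fooling-set matrix over F_p of rank at most r; consequently n/(rank)² ≥ 1 - 1/r, so the bound n ≤ (rank)² is asymptotically tight over F_p. -/
/-!
Let `q = p ^ t`, `F = 𝔽_{q³}`, `T x = x + x ^ q + x ^ q²` the trace of `F` over `𝔽_q` and
`n = q² + q + 1`. The matrix is `M i j = s (i + n - j)` with `s d = ∑_{T x = 0} x ^ ((q - 1) d)`;
these power sums are fixed by Frobenius, hence lie in `𝔽_p`.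

Expanding `T x ^ (q - 1)` and using that `∑_x x ^ N` vanishes unless `q³ - 1 ∣ N`, the power sum
`s d` (for `0 < d < n`) can be nonzero only if `(q - 1) d + (a + b q + c q²) = q³ - 1` for some
`a + b + c = q - 1`. If both `s d` and `s (n - d)` were nonzero, adding the two relations would write
`q³ - 1` in base `q` with digits of total `2 (q - 1)`, impossible; and `s n = q² - 1 = -1`.
So `M` is a fooling matrix.

For `x ≠ 0` with `T x = 0`, `y = x ^ (q - 1)` satisfies `y ^ (q + 1) + y + 1 = 0`, so `s` obeys a
linear recurrence of order `q + 1`; the rows of `M` obey it too, whence `rank M ≤ q + 1 = r`.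
-/

open Finset

section Digits

theorem Nat.add_one_eq_of_add_mul_eq_mul {q a m M : ℕ} (ha : a + 1 < 2 * q)
    (h : a + 1 + m * q = M * q) : a + 1 = q :=
  Nat.eq_of_dvd_of_lt_two_mul a.succ_ne_zero
    ((Nat.dvd_add_left (dvd_mul_left q m)).mp (h ▸ dvd_mul_left q M)) ha

theorem Nat.sub_one_mul_sq_add_add_one (q : ℕ) : (q - 1) * (q ^ 2 + q + 1) = q ^ 3 - 1 := by
  rcases q with _ | q
  · simp
  · simp only [Nat.add_sub_cancel]
    have : 1 ≤ (q + 1) ^ 3 := Nat.one_le_pow _ _ q.succ_pos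
    zify [this]
    ring

variable {q a b c : ℕ}

theorem digits_pos_and_lt (hq : 2 ≤ q) (habc : a + b + c = q - 1) :
    0 < a + b * q + c * q ^ 2 ∧ a + b * q + c * q ^ 2 < q ^ 3 - 1 := by
  have hq1 : 1 ≤ q := by omega
  have hlow : a + b + c ≤ a + b * q + c * q ^ 2 := by
    gcongr
    · exact Nat.le_mul_of_pos_right _ hq1
    · exact Nat.le_mul_of_pos_right _ (by positivity)
  have hup : a + b * q + c * q ^ 2 ≤ (a + b + c) * q ^ 2 := by
    rw [add_mul, add_mul]
    gcongr
    · exact Nat.le_mul_of_pos_right _ (by positivity)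
    · exact Nat.le_self_pow two_ne_zero q
  have h3 : q ^ 3 = (q - 1) * q ^ 2 + q ^ 2 := by
    rw [← Nat.succ_mul, Nat.succ_eq_add_one, Nat.sub_add_cancel hq1]; ring
  have h4 : 4 ≤ q ^ 2 := by nlinarith
  rw [habc] at hlow hup
  omega

theorem digits_eq_of_eq_pow_three_sub_one (hq : 1 ≤ q) (ha : a ≤ 2 * (q - 1))
    (hb : b ≤ 2 * (q - 1)) (hc : c ≤ 2 * (q - 1)) (h : a + b * q + c * q ^ 2 = q ^ 3 - 1) :
    a = q - 1 ∧ b = q - 1 ∧ c = q - 1 := by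
  obtain ⟨s, rfl⟩ : ∃ s, q = s + 1 := ⟨q - 1, by omega⟩
  simp only [Nat.add_sub_cancel] at *
  have h1 : a + 1 + (b + c * (s + 1)) * (s + 1) = (s + 1) ^ 2 * (s + 1) := by
    have : 1 ≤ (s + 1) ^ 3 := Nat.one_le_pow _ _ s.succ_pos
    have e1 : (b + c * (s + 1)) * (s + 1) = b * (s + 1) + c * (s + 1) ^ 2 := by ring
    have e2 : (s + 1) ^ 2 * (s + 1) = (s + 1) ^ 3 := by ring
    omega
  have ha' := Nat.add_one_eq_of_add_mul_eq_mul (by omega) h1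
  have h2 : b + 1 + c * (s + 1) = (s + 1) * (s + 1) := by
    refine Nat.eq_of_mul_eq_mul_right s.succ_pos ?_
    rw [Nat.add_right_cancel ha'] at h1
    nlinarith
  have hb' := Nat.add_one_eq_of_add_mul_eq_mul (by omega) h2
  have hc' : c * (s + 1) = s * (s + 1) := by nlinarith
  exact ⟨by omega, by omega, Nat.eq_of_mul_eq_mul_right s.succ_pos hc'⟩

end Digits

namespace FiniteField

variable {F : Type*} [Field F] [Fintype F]

theorem sum_pow_of_ne_zero {N : ℕ} (hN : N ≠ 0) :
    ∑ x : F, x ^ N = if Fintype.card F - 1 ∣ N then -1 else 0 := by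
  classical
  rw [← sum_pow_units F N, ← Fintype.sum_subtype_add_sum_subtype (fun x : F => x ≠ 0),
    Fintype.sum_eq_zero (fun x : {x : F // ¬x ≠ 0} => (x : F) ^ N)
      fun x => by rw [not_not.1 x.2, zero_pow hN], add_zero]
  exact Fintype.sum_equiv unitsEquivNeZero.symm _ _ fun _ => rfl

theorem sum_pow_eq_zero_of_not_dvd {N : ℕ} (h : ¬Fintype.card F - 1 ∣ N) :
    ∑ x : F, x ^ N = 0 := by
  rw [sum_pow_of_ne_zero (by rintro rfl; exact h (dvd_zero _)), if_neg h]

theorem pow_add_card_sub_one (x : F) {e : ℕ} (he : e ≠ 0) :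
    x ^ (e + (Fintype.card F - 1)) = x ^ e := by
  rcases eq_or_ne x 0 with rfl | hx
  · simp [he]
  · rw [pow_add, pow_card_sub_one_eq_one x hx, mul_one]

end FiniteField

open FiniteField

section RelTrace

variable {F : Type*} [Field F] {q : ℕ}

-- For `Fintype.card F = q ^ 3`, the trace of `F` over its subfield `𝔽_q`.
def relTrace (q : ℕ) (x : F) : F := x + x ^ q + x ^ q ^ 2

theorem relTrace_pow_sub_one (hq : 1 ≤ q) (x : F) :
    relTrace q x ^ (q - 1) = ∑ k ∈ range q, ∑ j ∈ range (k + 1),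
      (((q - 1).choose k * k.choose j : ℕ) : F) * x ^ (j + (k - j) * q + (q - 1 - k) * q ^ 2) := by
  rw [relTrace, add_pow, Nat.sub_add_cancel hq]
  refine sum_congr rfl fun k _ => ?_
  rw [add_pow, sum_mul, sum_mul]
  refine sum_congr rfl fun j _ => ?_
  rw [pow_add, pow_add, pow_mul', pow_mul' x (q - 1 - k)]
  push_cast
  ring

variable [Fintype F]

-- `1 - relTrace q x ^ (q - 1)` is the indicator of `relTrace q x = 0`, since the trace lies in
-- `𝔽_q`; so this is the power sum `∑_{relTrace q x = 0} x ^ e` over the kernel of the trace.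
variable (F) in
def kerPowSum (q e : ℕ) : F := ∑ x : F, x ^ e * (1 - relTrace q x ^ (q - 1))

theorem sum_pow_mul_relTrace_pow_eq_zero (hq : 1 ≤ q) {e : ℕ}
    (h : ∀ a b c, a + b + c = q - 1 → ¬Fintype.card F - 1 ∣ e + (a + b * q + c * q ^ 2)) :
    ∑ x : F, x ^ e * relTrace q x ^ (q - 1) = 0 := by
  simp_rw [relTrace_pow_sub_one hq, mul_sum]
  rw [sum_comm]
  refine sum_eq_zero fun k hk => ?_
  rw [sum_comm]
  refine sum_eq_zero fun j hj => ?_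
  have hjk : j + (k - j) + (q - 1 - k) = q - 1 := by
    rw [mem_range] at hk hj; omega
  simp_rw [mul_left_comm (_ ^ e : F), ← pow_add, ← mul_sum]
  rw [sum_pow_eq_zero_of_not_dvd (h _ _ _ hjk), mul_zero]

theorem kerPowSum_eq_sub (e : ℕ) :
    kerPowSum F q e = ∑ x : F, x ^ e - ∑ x : F, x ^ e * relTrace q x ^ (q - 1) := by
  simp_rw [kerPowSum, mul_sub, mul_one, sum_sub_distrib]

theorem kerPowSum_add_card_sub_one {e : ℕ} (he : e ≠ 0) :
    kerPowSum F q (e + (Fintype.card F - 1)) = kerPowSum F q e := by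
  simp only [kerPowSum, pow_add_card_sub_one _ he]

variable (hq : 2 ≤ q) (hcard : Fintype.card F = q ^ 3)
include hq hcard

theorem kerPowSum_pow_three_sub_one : kerPowSum F q (q ^ 3 - 1) = -1 := by
  have hpos : q ^ 3 - 1 ≠ 0 := by have := Nat.pow_le_pow_left hq 3; omega
  rw [kerPowSum_eq_sub, sum_pow_of_ne_zero hpos, hcard, if_pos dvd_rfl,
    sum_pow_mul_relTrace_pow_eq_zero (by omega), sub_zero]
  intro a b c habc hdvd
  obtain ⟨hpos, hlt⟩ := digits_pos_and_lt hq habc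
  rw [hcard, Nat.dvd_add_right dvd_rfl] at hdvd
  exact absurd (Nat.le_of_dvd hpos hdvd) (by omega)

theorem exists_digits_of_kerPowSum_ne_zero {e : ℕ} (he0 : 0 < e) (he : e < q ^ 3 - 1)
    (h : kerPowSum F q e ≠ 0) :
    ∃ a b c, a + b + c = q - 1 ∧ e + (a + b * q + c * q ^ 2) = q ^ 3 - 1 := by
  rw [kerPowSum_eq_sub, sum_pow_eq_zero_of_not_dvd (hcard ▸ Nat.not_dvd_of_pos_of_lt he0 he),
    zero_sub, neg_ne_zero] at h
  by_contra! hne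
  refine h (sum_pow_mul_relTrace_pow_eq_zero (by omega) fun a b c habc hdvd => hne a b c habc ?_)
  obtain ⟨hpos, hlt⟩ := digits_pos_and_lt hq habc
  exact Nat.eq_of_dvd_of_lt_two_mul (by omega) (hcard ▸ hdvd) (by omega)

theorem kerPowSum_mul_kerPowSum_eq_zero {d : ℕ} (hd0 : 0 < d) (hdn : d < q ^ 2 + q + 1) :
    kerPowSum F q ((q - 1) * d) * kerPowSum F q ((q - 1) * (q ^ 2 + q + 1 - d)) = 0 := by
  have hn := Nat.sub_one_mul_sq_add_add_one q
  have hrange : ∀ d', 0 < d' → d' < q ^ 2 + q + 1 → 0 < (q - 1) * d' ∧ (q - 1) * d' < q ^ 3 - 1 :=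
    fun d' h0 hlt => ⟨Nat.mul_pos (by omega) h0, hn ▸ Nat.mul_lt_mul_of_pos_left hlt (by omega)⟩
  by_contra hne
  obtain ⟨h1, h2⟩ := mul_ne_zero_iff.mp hne
  obtain ⟨a, b, c, habc, he⟩ := exists_digits_of_kerPowSum_ne_zero hq hcard
    (hrange d hd0 hdn).1 (hrange d hd0 hdn).2 h1
  obtain ⟨a', b', c', habc', he'⟩ := exists_digits_of_kerPowSum_ne_zero hq hcard
    (hrange _ (by omega) (by omega)).1 (hrange _ (by omega) (by omega)).2 h2
  have hsplit : (q - 1) * d + (q - 1) * (q ^ 2 + q + 1 - d) = q ^ 3 - 1 := by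
    rw [← mul_add, Nat.add_sub_cancel' hdn.le, hn]
  have hsum : (a + a') + (b + b') * q + (c + c') * q ^ 2 = q ^ 3 - 1 := by
    have : (a + a') + (b + b') * q + (c + c') * q ^ 2
        = (a + b * q + c * q ^ 2) + (a' + b' * q + c' * q ^ 2) := by ring
    omega
  have := digits_eq_of_eq_pow_three_sub_one (by omega) (by omega) (by omega) (by omega) hsum
  omega

end RelTrace

section CharP

variable {F : Type*} [Field F] (p : ℕ) [Fact p.Prime] [CharP F p] {q : ℕ}

theorem relTrace_frobenius (x : F) :
    relTrace q (frobenius F p x) = frobenius F p (relTrace q x) := by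
  simp only [relTrace, map_add, map_pow]

theorem exists_castHom_eq_of_pow_eq_self {x : F} (hx : x ^ p = x) :
    ∃ b : ZMod p, ZMod.castHom dvd_rfl F b = x := by
  rwa [← Subfield.mem_bot_iff_pow_eq_self F p, ← ZMod.fieldRange_castHom_eq_bot p,
    RingHom.mem_fieldRange] at hx

variable [Fintype F]

theorem kerPowSum_pow_char (e : ℕ) : kerPowSum F q e ^ p = kerPowSum F q e := by
  have hbij : Function.Bijective (frobenius F p) :=
    Finite.injective_iff_bijective.mp (frobenius_inj F p)
  rw [← frobenius_def, kerPowSum, map_sum]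
  exact Fintype.sum_bijective _ hbij _ _ fun x => by
    simp only [map_mul, map_sub, map_pow, map_one, relTrace_frobenius]

variable {t : ℕ} (hqt : q = p ^ t) (hcard : Fintype.card F = q ^ 3)
include hqt hcard

theorem relTrace_pow_self (x : F) : relTrace q x ^ q = relTrace q x := by
  have hfrob : ∀ y z : F, (y + z) ^ q = y ^ q + z ^ q := hqt ▸ fun y z => add_pow_char_pow y z p t
  have hx : x ^ (q ^ 2 * q) = x := by rw [← pow_succ]; exact hcard ▸ FiniteField.pow_card x
  rw [relTrace, hfrob, hfrob, ← pow_mul, ← pow_mul, ← sq, hx]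
  ring

theorem relTrace_mul_one_sub_relTrace_pow (hq : 1 ≤ q) (x : F) :
    relTrace q x * (1 - relTrace q x ^ (q - 1)) = 0 := by
  rw [mul_sub, mul_one, ← pow_succ', Nat.sub_add_cancel hq, relTrace_pow_self p hqt hcard,
    sub_self]

theorem kerPowSum_recurrence (hq : 1 ≤ q) (m : ℕ) :
    kerPowSum F q (m + q ^ 2) + kerPowSum F q (m + q) + kerPowSum F q (m + 1) = 0 := by
  simp only [kerPowSum, ← sum_add_distrib]
  refine sum_eq_zero fun x _ => ?_
  calc _ = x ^ m * (relTrace q x * (1 - relTrace q x ^ (q - 1))) := by rw [relTrace]; ring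
    _ = 0 := by rw [relTrace_mul_one_sub_relTrace_pow p hqt hcard hq, mul_zero]

end CharP

theorem Submodule.span_range_le_of_recurrence {R M : Type*} [Semiring R] [AddCommMonoid M]
    [Module R M] (v : ℕ → M) (k : ℕ)
    (h : ∀ i, v (i + k) ∈ span R (Set.range fun l : Fin k => v (i + l))) :
    span R (Set.range v) ≤ span R (Set.range fun l : Fin k => v l) := by
  rw [span_le]
  rintro _ ⟨j, rfl⟩
  induction j using Nat.strong_induction_on with
  | _ j ih =>
    by_cases hj : j < k
    · exact subset_span ⟨⟨j, hj⟩, rfl⟩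
    · obtain ⟨i, rfl⟩ := Nat.exists_eq_add_of_le' (not_lt.1 hj)
      refine span_le.2 ?_ (h i)
      rintro _ ⟨l, rfl⟩
      exact ih _ (by omega)

namespace Matrix

variable {ι R K : Type*}

def IsFooling [Mul R] [Zero R] (M : Matrix ι ι R) : Prop :=
  (∀ i, M i i ≠ 0) ∧ ∀ i j, i ≠ j → M i j * M j i = 0

theorem IsFooling.one_le_rank [Fintype ι] [Nonempty ι] [Field K] {M : Matrix ι ι K}
    (hM : M.IsFooling) : 1 ≤ M.rank := by
  rw [Nat.one_le_iff_ne_zero, rank_eq_finrank_span_cols, Ne, Submodule.finrank_eq_zero]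
  intro h
  obtain ⟨i⟩ := ‹Nonempty ι›
  have hcol : M.col i ∈ Submodule.span K (Set.range M.col) := Submodule.subset_span ⟨i, rfl⟩
  rw [h, Submodule.mem_bot] at hcol
  exact hM.1 i (congrFun hcol i)

theorem rank_le_of_row_recurrence [Fintype ι] [Field K] {m : ℕ} (ρ : ℕ → ι → K) (k : ℕ)
    (h : ∀ i, ρ (i + k) ∈ Submodule.span K (Set.range fun l : Fin k => ρ (i + l))) :
    (of fun i : Fin m => ρ i).rank ≤ k := by
  rw [rank_eq_finrank_span_row]
  calc _ ≤ Module.finrank K (Submodule.span K (Set.range fun l : Fin k => ρ l)) := by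
        refine Submodule.finrank_mono ((Submodule.span_mono ?_).trans
          (Submodule.span_range_le_of_recurrence ρ k h))
        rintro _ ⟨i, rfl⟩
        exact ⟨i, rfl⟩
    _ ≤ k := (finrank_range_le_card (R := K) fun l : Fin k => ρ l).trans_eq (Fintype.card_fin k)

variable {n : ℕ}

theorem isFooling_of_periodic [CommMonoidWithZero R] (g : ℕ → R)
    (hper : ∀ d, 0 < d → g (d + n) = g d) (hdiag : g n ≠ 0)
    (hfool : ∀ d, 0 < d → d < n → g d * g (n - d) = 0) :
    (of fun i j : Fin n => g (i + n - j)).IsFooling := by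
  refine ⟨fun i => by simpa using hdiag, fun i j hij => ?_⟩
  simp only [of_apply]
  rcases lt_or_gt_of_ne (Fin.val_ne_of_ne hij) with h | h
  · rw [show (i : ℕ) + n - j = n - (j - i) by omega,
      show (j : ℕ) + n - i = (j - i) + n by omega, hper _ (by omega), mul_comm]
    exact hfool _ (by omega) (by omega)
  · rw [show (i : ℕ) + n - j = (i - j) + n by omega,
      show (j : ℕ) + n - i = n - (i - j) by omega, hper _ (by omega)]
    exact hfool _ (by omega) (by omega)

theorem rank_le_of_trinomial_recurrence [Field K] {q : ℕ} (hq : 1 ≤ q) (g : ℕ → K)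
    (hrec : ∀ A, 0 < A → g (A + q + 1) + g (A + 1) + g A = 0) :
    (of fun i j : Fin n => g (i + n - j)).rank ≤ q + 1 := by
  refine rank_le_of_row_recurrence (fun i (j : Fin n) => g (i + n - j)) (q + 1) fun i => ?_
  have hrow : (fun j : Fin n => g (i + (q + 1) + n - j))
      = -(fun j : Fin n => g (i + 1 + n - j)) - fun j : Fin n => g (i + 0 + n - j) := by
    funext j
    have := hrec (i + n - j) (by omega)
    simp only [Pi.sub_apply, Pi.neg_apply, add_zero]
    rw [show i + (q + 1) + n - j = i + n - j + q + 1 by omega,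
      show i + 1 + n - j = i + n - j + 1 by omega]
    linear_combination this
  rw [hrow]
  exact sub_mem (neg_mem (Submodule.subset_span ⟨⟨1, by omega⟩, rfl⟩))
    (Submodule.subset_span ⟨⟨0, by omega⟩, rfl⟩)

end Matrix

theorem exists_isFooling_rank_le (p : ℕ) [Fact p.Prime] {t n : ℕ} (ht : t ≠ 0)
    (hn : n = (p ^ t) ^ 2 + p ^ t + 1) :
    ∃ M : Matrix (Fin n) (Fin n) (ZMod p), M.IsFooling ∧ M.rank ≤ p ^ t + 1 := by
  set q := p ^ t with hqt
  have hq : 2 ≤ q := (Fact.out : p.Prime).two_le.trans (Nat.le_self_pow ht p)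
  let F := GaloisField p (3 * t)
  let _ : Fintype F := Fintype.ofFinite F
  have hcard : Fintype.card F = q ^ 3 := by
    rw [Fintype.card_eq_nat_card, GaloisField.card p _ (by omega), hqt, ← pow_mul, mul_comm]
  have hqn : (q - 1) * n = Fintype.card F - 1 := hn ▸ hcard ▸ Nat.sub_one_mul_sq_add_add_one q
  choose g hg using fun d =>
    exists_castHom_eq_of_pow_eq_self p (kerPowSum_pow_char (F := F) (q := q) p ((q - 1) * d))
  have hinj := (ZMod.castHom dvd_rfl F).injective
  refine ⟨_, Matrix.isFooling_of_periodic g (fun d hd => hinj ?_) ?_ (fun d hd0 hdn => hinj ?_),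
    Matrix.rank_le_of_trinomial_recurrence (by omega) g fun A hA => hinj ?_⟩
  · rw [hg, hg, mul_add, hqn, kerPowSum_add_card_sub_one (Nat.mul_pos (by omega) hd).ne']
  · rw [← (map_ne_zero (ZMod.castHom dvd_rfl F)), hg, hqn, hcard,
      kerPowSum_pow_three_sub_one hq hcard]
    exact neg_ne_zero.2 one_ne_zero
  · rw [map_mul, hg, hg, map_zero, hn]
    exact kerPowSum_mul_kerPowSum_eq_zero hq hcard hd0 (hn ▸ hdn)
  · have hpos : 1 ≤ (q - 1) * A := Nat.mul_pos (by omega) hA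
    have e1 : (q - 1) * (A + q + 1) = ((q - 1) * A - 1) + q ^ 2 := by
      zify [hpos, hq.trans' one_le_two]; ring
    have e2 : (q - 1) * (A + 1) = ((q - 1) * A - 1) + q := by
      zify [hpos, hq.trans' one_le_two]; ring
    have e3 : (q - 1) * A = ((q - 1) * A - 1) + 1 := by omega
    rw [map_add, map_add, hg, hg, hg, map_zero, e1, e2, e3]
    exact kerPowSum_recurrence p hqt hcard (by omega) _

theorem one_sub_inv_le_div_sq {r R : ℕ} (hR : 0 < R) (hRr : R ≤ r) :
    (1 : ℚ) - 1 / r ≤ ((r * (r - 1) + 1 : ℕ) : ℚ) / (R : ℚ) ^ 2 := by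
  have hr : (1 : ℚ) ≤ r := by exact_mod_cast hR.trans_le hRr
  push_cast [hR.trans_le hRr]
  calc (1 : ℚ) - 1 / r ≤ (r * (r - 1) + 1) / (r : ℚ) ^ 2 := by
        rw [le_div_iff₀ (by positivity)]
        field_simp
        nlinarith
    _ ≤ (r * (r - 1) + 1) / (R : ℚ) ^ 2 := by
        gcongr

theorem asymptotically_tight (p : ℕ) [Fact p.Prime] (t : ℕ) (ht : 1 ≤ t)
    (r n : ℕ) (hr : r = p ^ t + 1) (hn : n = r * (r - 1) + 1) :
    ∃ M : Matrix (Fin n) (Fin n) (ZMod p),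
      (∀ i, M i i ≠ 0) ∧ (∀ i j, i ≠ j → M i j * M j i = 0) ∧
      M.rank ≤ r ∧ (1 : ℚ) - 1 / (r : ℚ) ≤ (n : ℚ) / ((M.rank : ℚ)) ^ 2 := by
  obtain ⟨M, hM, hrank⟩ := exists_isFooling_rank_le p (t := t) (n := n) (by omega)
    (by rw [hn, hr, Nat.add_sub_cancel]; ring)
  have : Nonempty (Fin n) := ⟨⟨0, by omega⟩⟩
  refine ⟨M, hM.1, hM.2, hr ▸ hrank, ?_⟩
  have hbound := one_sub_inv_le_div_sq hM.one_le_rank (hr ▸ hrank)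
  rwa [← hn] at hbound
end

section
/- For every integer t ∈ ℤ and all i, j ∈ ℕ, the function f_t satisfies the recurrence f_t(i,j) = f_{t-1}(i,j) + f_{t-1}(i+1,j). -/
/-!
`f_t(i,j) = g_t(j - i)` depends only on `t` and the diagonal index, and in terms of `g` the
recurrence reads `g_t(d) = g_{t-1}(d) + g_{t-1}(d-1)`. In each regime of the case distinction
defining `f_t` (`t ≥ 2`; `t = 1`; `t ≤ 0` with `d ≥ 2`, `d = 1` or `d ≤ 0`) this is Pascal's rule
for generalized binomial coefficients, up to signs; across the boundaries between regimes the
missing terms are supplied by `C(s,s) = 1` and `C(-1,k) = (-1)^k`.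
-/

/-- Generalized binomial coefficient `C(n,k)` for integers, zero when `k < 0`. -/
noncomputable def genChoose (n k : ℤ) : ℤ :=
  if k < 0 then 0 else Ring.choose n k.toNat

/-- The function `f_t(i,j)` from the characteristic-zero construction. -/
noncomputable def ft (t : ℤ) (i j : ℕ) : ℤ :=
  if 0 < t then genChoose (t - 1) ((j : ℤ) - i - 1)
  else if i < j then (-1) ^ (j - i) * genChoose (-t - 1 + j - i) (-t - 1)
  else (-1) ^ ((i : ℤ) - j - t).toNat * genChoose ((i : ℤ) - j - 1) (-t)

/-- The block fooling-set matrix `M^(r)` over `ℚ`: block `(a,b)` (0-indexed here,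
so `a,b ∈ {0,…,r-1}` correspond to `a+1,b+1` in 1-indexed notation) has height
`r - a` and width `r - b`, with entries `f_{a-b}(i,j)` (1-indexed `i,j`). -/
noncomputable def Mr (r : ℕ) :
    Matrix ((a : Fin r) × Fin (r - a.val)) ((a : Fin r) × Fin (r - a.val)) ℚ :=
  fun x y => (ft ((x.1 : ℤ) - (y.1 : ℤ)) (x.2.val + 1) (y.2.val + 1) : ℚ)

theorem Ring.choose_neg_one {R : Type*} [Ring R] [BinomialRing R] (k : ℕ) :
    Ring.choose (-1 : R) k = (-1) ^ k := by
  have h := Ring.choose_neg (1 : R) k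
  rw [add_sub_cancel_left, Ring.choose_natCast, Nat.choose_self, Nat.cast_one, Units.smul_def,
    zsmul_one, Int.cast_negOnePow_natCast] at h
  exact h

theorem Int.eq_add_two_or_eq_one_or_eq_neg (d : ℤ) :
    (∃ n : ℕ, d = n + 2) ∨ d = 1 ∨ ∃ e : ℕ, d = -e := by
  rcases lt_trichotomy d 1 with h | rfl | h
  · exact .inr (.inr ⟨d.natAbs, by omega⟩)
  · exact .inr (.inl rfl)
  · exact .inl ⟨(d - 2).toNat, by omega⟩

theorem genChoose_of_neg {n k : ℤ} (hk : k < 0) : genChoose n k = 0 := if_pos hk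

theorem genChoose_natCast_right (n : ℤ) (k : ℕ) : genChoose n k = Ring.choose n k := by
  simp [genChoose]

theorem genChoose_zero_right (n : ℤ) : genChoose n 0 = 1 := by
  simpa using genChoose_natCast_right n 0

theorem genChoose_self (n : ℕ) : genChoose n n = 1 := by
  rw [genChoose_natCast_right, Ring.choose_natCast, Nat.choose_self, Nat.cast_one]

theorem genChoose_zero_left_of_pos {k : ℤ} (hk : 0 < k) : genChoose 0 k = 0 := by
  obtain ⟨m, rfl⟩ : ∃ m : ℕ, k = (m + 1 : ℕ) := ⟨(k - 1).toNat, by omega⟩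
  rw [genChoose_natCast_right, Ring.choose_zero_succ]

theorem genChoose_neg_one_left (k : ℕ) : genChoose (-1) k = (-1) ^ k := by
  rw [genChoose_natCast_right, Ring.choose_neg_one]

theorem genChoose_pascal (n k : ℤ) :
    genChoose n k = genChoose (n - 1) (k - 1) + genChoose (n - 1) k := by
  rcases lt_trichotomy k 0 with hk | rfl | hk
  · simp [genChoose_of_neg hk, genChoose_of_neg (by omega : k - 1 < 0)]
  · rw [genChoose_zero_right, genChoose_zero_right, genChoose_of_neg (by norm_num), zero_add]
  · obtain ⟨m, rfl⟩ : ∃ m : ℕ, k = (m + 1 : ℕ) := ⟨(k - 1).toNat, by omega⟩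
    rw [Nat.cast_succ, add_sub_cancel_right, ← Nat.cast_succ, genChoose_natCast_right,
      genChoose_natCast_right, genChoose_natCast_right, ← Ring.choose_succ_succ, sub_add_cancel]

/-- `ft t i j` as a function of `t` and the diagonal index `d = j - i`. -/
noncomputable def ftDiag (t d : ℤ) : ℤ :=
  if 0 < t then genChoose (t - 1) (d - 1)
  else if 0 < d then (-1) ^ d.toNat * genChoose (-t - 1 + d) (-t - 1)
  else (-1) ^ (-d - t).toNat * genChoose (-d - 1) (-t)

theorem ft_eq_ftDiag (t : ℤ) (i j : ℕ) : ft t i j = ftDiag t (j - i) := by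
  unfold ft ftDiag
  split_ifs <;> first | omega | congr 2 <;> omega

theorem ftDiag_of_pos {t : ℤ} (ht : 0 < t) (d : ℤ) :
    ftDiag t d = genChoose (t - 1) (d - 1) :=
  if_pos ht

theorem ftDiag_neg_natCast_add_one (s n : ℕ) :
    ftDiag (-s) (n + 1) = (-1) ^ (n + 1) * genChoose (s + n) (s - 1) := by
  rw [ftDiag, if_neg (by omega), if_pos (by omega)]
  congr 2 <;> omega

theorem ftDiag_neg_natCast_neg (s e : ℕ) :
    ftDiag (-s) (-e) = (-1) ^ (s + e) * genChoose (e - 1) s := by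
  rw [ftDiag, if_neg (by omega), if_neg (by omega)]
  congr 2 <;> omega

theorem ftDiag_pascal_of_one_lt {t : ℤ} (ht : 1 < t) (d : ℤ) :
    ftDiag t d = ftDiag (t - 1) d + ftDiag (t - 1) (d - 1) := by
  rw [ftDiag_of_pos (by omega), ftDiag_of_pos (by omega), ftDiag_of_pos (by omega),
    genChoose_pascal, add_comm]

theorem ftDiag_pascal_one (d : ℤ) : ftDiag 1 d = ftDiag 0 d + ftDiag 0 (d - 1) := by
  rw [ftDiag_of_pos one_pos, sub_self, show ftDiag 0 = ftDiag (-(0 : ℕ)) by simp]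
  obtain ⟨n, rfl⟩ | rfl | ⟨e, rfl⟩ := d.eq_add_two_or_eq_one_or_eq_neg
  · rw [show (n : ℤ) + 2 - 1 = n + 1 by ring,
      show (n : ℤ) + 2 = (n + 1 : ℕ) + 1 by push_cast; ring,
      ftDiag_neg_natCast_add_one, ftDiag_neg_natCast_add_one]
    simp [genChoose_zero_left_of_pos, genChoose_of_neg]
  · rw [sub_self, genChoose_zero_right, show (0 : ℤ) = -(0 : ℕ) by simp,
      show (1 : ℤ) = (0 : ℕ) + 1 by simp, ftDiag_neg_natCast_add_one, ftDiag_neg_natCast_neg,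
      genChoose_of_neg (by omega)]
    simp [genChoose_zero_right]
  · rw [show -(e : ℤ) - 1 = -(e + 1 : ℕ) by push_cast; ring, ftDiag_neg_natCast_neg,
      ftDiag_neg_natCast_neg, genChoose_of_neg (by omega)]
    simp [genChoose_zero_right]
    ring

theorem ftDiag_pascal_neg (s : ℕ) (d : ℤ) :
    ftDiag (-s) d = ftDiag (-(s + 1 : ℕ)) d + ftDiag (-(s + 1 : ℕ)) (d - 1) := by
  obtain ⟨n, rfl⟩ | rfl | ⟨e, rfl⟩ := d.eq_add_two_or_eq_one_or_eq_neg
  · rw [show (n : ℤ) + 2 - 1 = n + 1 by ring,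
      show (n : ℤ) + 2 = (n + 1 : ℕ) + 1 by push_cast; ring,
      ftDiag_neg_natCast_add_one, ftDiag_neg_natCast_add_one, ftDiag_neg_natCast_add_one]
    have hP := genChoose_pascal (s + n + 2) s
    push_cast
    ring_nf at hP ⊢
    linear_combination (-(-1) ^ n) * hP
  · rw [sub_self, show (0 : ℤ) = -(0 : ℕ) by simp, show (1 : ℤ) = (0 : ℕ) + 1 by simp,
      ftDiag_neg_natCast_add_one, ftDiag_neg_natCast_add_one, ftDiag_neg_natCast_neg]
    have hP := genChoose_pascal (s + 1) s
    have hN := genChoose_neg_one_left (s + 1)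
    push_cast at hN ⊢
    simp only [add_zero, add_sub_cancel_right] at hP ⊢
    rw [hN, ← mul_pow, hP, genChoose_self]
    ring
  · rw [show -(e : ℤ) - 1 = -(e + 1 : ℕ) by push_cast; ring, ftDiag_neg_natCast_neg,
      ftDiag_neg_natCast_neg, ftDiag_neg_natCast_neg]
    have hP := genChoose_pascal e (s + 1)
    push_cast
    ring_nf at hP ⊢
    linear_combination (-(-1) ^ (s + e)) * hP

theorem ftDiag_pascal (t d : ℤ) : ftDiag t d = ftDiag (t - 1) d + ftDiag (t - 1) (d - 1) := by
  obtain ht | rfl | ht : 1 < t ∨ t = 1 ∨ t ≤ 0 := by omega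
  · exact ftDiag_pascal_of_one_lt ht d
  · exact ftDiag_pascal_one d
  · obtain ⟨s, rfl⟩ : ∃ s : ℕ, t = -s := ⟨t.natAbs, by omega⟩
    rw [show -(s : ℤ) - 1 = -(s + 1 : ℕ) by push_cast; ring]
    exact ftDiag_pascal_neg s d

theorem ft_recurrence :
    ∀ t : ℤ, ∀ i j : ℕ, 1 ≤ i → 1 ≤ j →
      ft t i j = ft (t - 1) i j + ft (t - 1) (i + 1) j := by
  intro t i j _ _
  have hshift : ((j : ℤ) - (i + 1 : ℕ)) = (j - i) - 1 := by push_cast; ring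
  rw [ft_eq_ftDiag, ft_eq_ftDiag, ft_eq_ftDiag, hshift]
  exact ftDiag_pascal t _
end

section
/- The matrix M^(r) over ℚ of size C(r+1,2) built from the functions f_t has rank exactly r. -/
namespace genChoose

lemma of_neg {n k : ℤ} (hk : k < 0) : genChoose n k = 0 := by
  simp [genChoose, hk]

lemma of_nonneg (n : ℤ) {k : ℤ} (hk : 0 ≤ k) : genChoose n k = Ring.choose n k.toNat := by
  simp [genChoose, hk.not_gt]

@[simp]
lemma zero_right (n : ℤ) : genChoose n 0 = 1 := by
  simp [genChoose]

lemma zero_left {k : ℤ} (hk : 0 < k) : genChoose 0 k = 0 := by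
  rw [of_nonneg 0 hk.le]
  exact Ring.choose_zero_pos ℤ (by omega)

lemma natCast (n k : ℕ) : genChoose n k = n.choose k := by
  rw [of_nonneg _ (Int.natCast_nonneg k), Int.toNat_natCast, Ring.choose_natCast]

lemma neg_natCast_sub_one (m k : ℕ) : genChoose (-m - 1) k = (-1) ^ k * (m + k).choose k := by
  rw [of_nonneg _ (Int.natCast_nonneg k), Int.toNat_natCast, show (-m - 1 : ℤ) = -(m + 1) by ring,
    Ring.choose_neg, show ((m : ℤ) + 1 + k - 1) = ((m + k : ℕ) : ℤ) by push_cast; ring,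
    Ring.choose_natCast, Units.smul_def, Int.coe_negOnePow_natCast, smul_eq_mul]

lemma pascal (n k : ℤ) : genChoose n k = genChoose (n - 1) k + genChoose (n - 1) (k - 1) := by
  rcases lt_trichotomy k 0 with hk | rfl | hk
  · rw [of_neg hk, of_neg hk, of_neg (by omega), add_zero]
  · rw [zero_right, zero_right, of_neg (by omega), add_zero]
  · obtain ⟨m, rfl⟩ : ∃ m : ℕ, k = m + 1 := ⟨(k - 1).toNat, by omega⟩
    rw [of_nonneg _ hk.le, of_nonneg _ hk.le, of_nonneg _ (by omega),
      show ((m : ℤ) + 1).toNat = m + 1 by omega, show ((m : ℤ) + 1 - 1).toNat = m by omega,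
      add_comm (Ring.choose (n - 1) _), ← Ring.choose_succ_succ, sub_add_cancel]

end genChoose

noncomputable def fBinom (t d : ℤ) : ℤ :=
  if 0 < t then genChoose (t - 1) (d - 1)
  else if 0 ≤ d then genChoose t d
  else -genChoose (t - 1) (t - d - 1)

lemma fBinom_pascal (t d : ℤ) : fBinom t d = fBinom (t - 1) d + fBinom (t - 1) (d - 1) := by
  rcases lt_trichotomy t 1 with ht | rfl | ht
  · simp only [fBinom, if_neg (show ¬ 0 < t by omega), if_neg (show ¬ 0 < t - 1 by omega)]
    rcases lt_trichotomy d 0 with hd | rfl | hd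
    · rw [if_neg (by omega), if_neg (by omega), if_neg (by omega), genChoose.pascal (t - 1)]
      ring_nf
    · rw [if_pos le_rfl, if_pos le_rfl, if_neg (by omega),
        genChoose.of_neg (k := t - 1 - (0 - 1) - 1) (by omega), genChoose.zero_right,
        genChoose.zero_right]
      simp
    · rw [if_pos hd.le, if_pos hd.le, if_pos (by omega), genChoose.pascal t]
  · simp only [fBinom, if_pos one_pos, sub_self, lt_irrefl, if_false]
    rcases lt_trichotomy d 0 with hd | rfl | hd
    · rw [if_neg (by omega), if_neg (by omega), genChoose.of_neg (by omega)]
      have h := genChoose.pascal 0 (-d)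
      rw [genChoose.zero_left (by omega)] at h
      ring_nf at h ⊢
      linarith
    · simp [genChoose.of_neg]
    · rw [if_pos hd.le, if_pos (by omega), genChoose.zero_left hd, zero_add]
  · simp only [fBinom, if_pos (show 0 < t by omega), if_pos (show 0 < t - 1 by omega)]
    rw [genChoose.pascal (t - 1)]

lemma ft_neg_of_lt (m i e : ℕ) : ft (-m) i (i + e + 1) = genChoose (-m) (e + 1) := by
  rw [ft, if_neg (by omega), if_pos (by omega), show i + e + 1 - i = e + 1 by omega]
  rcases m with _ | m
  · rw [genChoose.of_neg (by omega), Nat.cast_zero, neg_zero, genChoose.zero_left (by omega),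
      mul_zero]
  · have e1 : - -((m + 1 : ℕ) : ℤ) - 1 + ((i + e + 1 : ℕ) : ℤ) - i = ((m + (e + 1) : ℕ) : ℤ) := by
      push_cast; ring
    have e2 : - -((m + 1 : ℕ) : ℤ) - 1 = m := by push_cast; ring
    have e3 : -((m + 1 : ℕ) : ℤ) = -m - 1 := by push_cast; ring
    rw [e1, e2, e3, ← Nat.cast_succ, genChoose.natCast, genChoose.neg_natCast_sub_one,
      Nat.choose_symm_add]

lemma ft_neg_self (m j : ℕ) : ft (-m) j j = 1 := by
  have h := genChoose.neg_natCast_sub_one 0 m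
  rw [Nat.cast_zero, neg_zero, zero_sub, zero_add, Nat.choose_self, Nat.cast_one, mul_one] at h
  rw [ft, if_neg (by omega), if_neg (by omega), sub_self, zero_sub, zero_sub, neg_neg,
    Int.toNat_natCast, h, ← mul_pow]
  norm_num

lemma ft_neg_of_gt (m j n : ℕ) :
    ft (-m) (j + n + 1) j = -genChoose (-m - 1) (n - m) := by
  rw [ft, if_neg (by omega), if_neg (by omega),
    show ((j + n + 1 : ℕ) : ℤ) - j - -(m : ℤ) = ((n + 1 + m : ℕ) : ℤ) by push_cast; ring,
    show ((j + n + 1 : ℕ) : ℤ) - j - 1 = n by push_cast; ring, neg_neg, Int.toNat_natCast,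
    genChoose.natCast]
  rcases lt_or_ge n m with hnm | hnm
  · rw [Nat.choose_eq_zero_of_lt hnm, genChoose.of_neg (by omega)]
    simp
  · obtain ⟨p, rfl⟩ : ∃ p, n = m + p := ⟨n - m, by omega⟩
    rw [show ((m + p : ℕ) : ℤ) - m = p by push_cast; ring, genChoose.neg_natCast_sub_one,
      Nat.choose_symm_add, show m + p + 1 + m = p + 1 + 2 * m by ring, pow_add, pow_mul]
    ring

lemma ft_eq_fBinom (t : ℤ) (i j : ℕ) : ft t i j = fBinom t (j - i) := by
  rcases lt_or_ge 0 t with ht | ht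
  · rw [ft, fBinom, if_pos ht, if_pos ht]
  obtain ⟨m, rfl⟩ : ∃ m : ℕ, t = -m := ⟨(-t).toNat, by omega⟩
  rw [fBinom, if_neg (by omega)]
  obtain ⟨e, rfl⟩ | rfl | ⟨n, rfl⟩ :
      (∃ e, j = i + e + 1) ∨ j = i ∨ ∃ n, i = j + n + 1 := by
    rcases lt_trichotomy i j with h | h | h
    exacts [.inl ⟨j - i - 1, by omega⟩, .inr (.inl h.symm), .inr (.inr ⟨i - j - 1, by omega⟩)]
  · rw [ft_neg_of_lt, if_pos (by omega)]
    congr 1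
    push_cast
    ring
  · rw [ft_neg_self, sub_self, if_pos le_rfl, genChoose.zero_right]
  · rw [ft_neg_of_gt, if_neg (by omega)]
    congr 2
    push_cast
    ring

lemma ft_succ (t : ℤ) (i j : ℕ) : ft t i j = ft (t - 1) i j + ft (t - 1) (i + 1) j := by
  rw [ft_eq_fBinom, ft_eq_fBinom, ft_eq_fBinom, fBinom_pascal, Nat.cast_succ, sub_add_eq_sub_sub]

lemma eq_sum_choose_nsmul_of_succ_eq_add {M : Type*} [AddCommMonoid M] (F : ℕ → ℕ → M)
    (hF : ∀ s i, F (s + 1) i = F s i + F s (i + 1)) (a i : ℕ) :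
    F a i = ∑ k ∈ Finset.range (a + 1), a.choose k • F 0 (i + k) := by
  induction a generalizing i with
  | zero => simp
  | succ a ih =>
    rw [hF, ih, ih, Finset.sum_choose_succ_nsmul (fun k _ => F 0 (i + k))]
    simp only [add_assoc, add_comm 1]

lemma ft_add_natCast_eq_sum (t : ℤ) (a i j : ℕ) :
    ft (t + a) i j = ∑ k ∈ Finset.range (a + 1), (a.choose k : ℤ) * ft t (i + k) j := by
  have hF : ∀ s i, ft (t + (s + 1 : ℕ)) i j = ft (t + s) i j + ft (t + s) (i + 1) j := by
    intro s i
    rw [ft_succ, Nat.cast_succ, ← add_assoc, add_sub_cancel_right]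
  simpa only [Nat.cast_zero, add_zero, nsmul_eq_mul] using
    eq_sum_choose_nsmul_of_succ_eq_add (fun s i => ft (t + s) i j) hF a i

lemma sum_range_ite_choose_sub {R : Type*} [Semiring R] (h : ℕ → R) {a i n : ℕ}
    (hn : i + a < n) :
    ∑ s ∈ Finset.range n, (if i ≤ s then (a.choose (s - i) : R) * h s else 0) =
      ∑ k ∈ Finset.range (a + 1), (a.choose k : R) * h (i + k) := by
  have hsub : Finset.Ico i (i + (a + 1)) ⊆ Finset.range n := by
    intro s hs
    simp only [Finset.mem_Ico, Finset.mem_range] at hs ⊢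
    omega
  rw [← Finset.sum_subset hsub, Finset.sum_Ico_eq_sum_range, Nat.add_sub_cancel_left]
  · refine Finset.sum_congr rfl fun k _ => ?_
    rw [if_pos (Nat.le_add_right i k), Nat.add_sub_cancel_left]
  · intro s _ hs
    simp only [Finset.mem_Ico, not_and_or, not_le, not_lt] at hs
    split_ifs with his
    · rw [Nat.choose_eq_zero_of_lt (by omega), Nat.cast_zero, zero_mul]
    · rfl

lemma ft_zero_of_lt {i j : ℕ} (h : i < j) : ft 0 i j = 0 := by
  obtain ⟨e, rfl⟩ : ∃ e, j = i + e + 1 := ⟨j - i - 1, by omega⟩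
  simpa [genChoose.zero_left] using ft_neg_of_lt 0 i e

lemma ft_zero_self (i : ℕ) : ft 0 i i = 1 := by
  simpa using ft_neg_self 0 i

lemma card_sigma_fin_sub (r : ℕ) :
    Fintype.card ((a : Fin r) × Fin (r - a.val)) = (r + 1).choose 2 := by
  rw [Fintype.card_sigma]
  simp only [Fintype.card_fin]
  rw [Fin.sum_univ_eq_sum_range (fun a => r - a), ← Finset.sum_range_reflect,
    Finset.sum_congr rfl fun a ha => show r - (r - 1 - a) = a + 1 by
      rw [Finset.mem_range] at ha; omega,
    show ∑ a ∈ Finset.range r, (a + 1) = ∑ a ∈ Finset.range (r + 1), a by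
      rw [Finset.sum_range_succ']; rfl,
    Finset.sum_range_id, Nat.choose_two_right, Nat.add_sub_cancel]

namespace Mr

def firstBlock (r : ℕ) (s : Fin r) : (a : Fin r) × Fin (r - a.val) :=
  ⟨⟨0, s.pos⟩, ⟨s, by simp⟩⟩

noncomputable def coeff (r : ℕ) : Matrix ((a : Fin r) × Fin (r - a.val)) (Fin r) ℚ :=
  fun x s => if x.2.val ≤ s.val then (x.1.val.choose (s.val - x.2.val) : ℚ) else 0

lemma eq_coeff_mul (r : ℕ) : Mr r = coeff r * (Mr r).submatrix (firstBlock r) id := by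
  ext ⟨a, i⟩ ⟨b, j⟩
  have hia : i.val + a.val < r := by omega
  simp only [Mr, coeff, firstBlock, Matrix.mul_apply, Matrix.submatrix_apply, id, ite_mul,
    zero_mul, Nat.cast_zero, zero_sub]
  rw [Fin.sum_univ_eq_sum_range (fun s => if i.val ≤ s then (a.val.choose (s - i.val) : ℚ) *
      (ft (-b.val) (s + 1) (j.val + 1) : ℚ) else 0), sum_range_ite_choose_sub _ hia,
    sub_eq_neg_add, ft_add_natCast_eq_sum]
  push_cast
  simp only [add_right_comm]

lemma rank_submatrix_firstBlock (r : ℕ) :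
    ((Mr r).submatrix (firstBlock r) (firstBlock r)).rank = r := by
  have htri : ((Mr r).submatrix (firstBlock r) (firstBlock r)).IsLowerTriangular := by
    intro s t (hst : s < t)
    simp [Mr, firstBlock, ft_zero_of_lt (Nat.succ_lt_succ hst)]
  have hdet : ((Mr r).submatrix (firstBlock r) (firstBlock r)).det = 1 := by
    simp [Matrix.det_of_isLowerTriangular _ htri, Mr, firstBlock, ft_zero_self]
  rw [Matrix.rank_of_isUnit _ ((Matrix.isUnit_iff_isUnit_det _).mpr (by simp [hdet])),
    Fintype.card_fin]

end Mr

theorem Mr_rank_general (r : ℕ) :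
    Fintype.card ((a : Fin r) × Fin (r - a.val)) = Nat.choose (r + 1) 2 ∧
    (Mr r).rank = r := by
  refine ⟨card_sigma_fin_sub r, le_antisymm ?_ ?_⟩
  · calc (Mr r).rank = (Mr.coeff r * (Mr r).submatrix (Mr.firstBlock r) id).rank := by
          rw [← Mr.eq_coeff_mul]
      _ ≤ ((Mr r).submatrix (Mr.firstBlock r) id).rank := Matrix.rank_mul_le_right _ _
      _ ≤ r := (Matrix.rank_le_card_height _).trans (Fintype.card_fin r).le
  · calc r = ((Mr r).submatrix (Mr.firstBlock r) (Mr.firstBlock r)).rank :=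
          (Mr.rank_submatrix_firstBlock r).symm
      _ ≤ (Mr r).rank := Matrix.rank_submatrix_le _ _ _

theorem Mr_rank (r : ℕ) (hr : 1 ≤ r) :
    Fintype.card ((a : Fin r) × Fin (r - a.val)) = Nat.choose (r + 1) 2 ∧
    (Mr r).rank = r :=
  Mr_rank_general r
end
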